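/- arXiv:2603.11478 — 9 statements merged into one kernel-verified Lean document; each statement's English description precedes it below -/
import Mathlib

section
/- (Gale–Ryser, column-sum form) Let a ∈ ℕ^m and b ∈ ℕ^n with b sorted in non-increasing order, and let z_j = |{i : a_i ≥ j}|. Then there exists an m×n binary matrix with row sums a and column sums b if and only if Σ_i a_i = Σ_j b_j and for every r ∈ {1,…,n}, Σ_{j=1}^r z_j ≥ Σ_{j=1}^r b_j. -/
/-!
Necessity is double counting: row `i` has at most `min (a i) r` ones among the first `r`
columns, and `∑ s ∈ Icc 1 r, z s = ∑ i, min (a i) r`.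

For sufficiency, start from the left-justified matrix (row `i` filled in its first `a i`
columns), whose column sums are the conjugate `z`; the hypothesis says that `z` dominates `b`.
While the column sums `c` differ from `b`, let `j` be the first column with `c j ≠ b j`
(so `c j > b j`) and `k` the first with `c k < b k`. Then `j < k`, every prefix sum of `c`
ending strictly between `j` and `k` exceeds that of `b`, and since `b` is antitone,
`c k < c j`, so some row has a one in column `j` and a zero in column `k`. Moving that one
to column `k` keeps row sums and dominance and strictly decreases `∑ r, prefixSum c r`.
-/

open Finset

namespace GaleRyser

variable {α : Type*} {n : ℕ}

def rowSum (M : α → Fin n → Bool) (i : α) : ℕ := #{j | M i j = true}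

def colSum [Fintype α] (M : α → Fin n → Bool) (j : Fin n) : ℕ := #{i | M i j = true}

def prefixSum (c : Fin n → ℕ) (r : ℕ) : ℕ := ∑ j : Fin n with j.val < r, c j

section PrefixSum

variable (c : Fin n → ℕ)

@[simp]
lemma prefixSum_zero : prefixSum c 0 = 0 := by
  simp [prefixSum]

lemma prefixSum_succ (j : Fin n) : prefixSum c (j + 1) = prefixSum c j + c j := by
  have : univ.filter (fun x : Fin n => x.val < j.val + 1) =
      insert j (univ.filter fun x : Fin n => x.val < j.val) := by
    ext x
    simp only [mem_filter, mem_univ, true_and, mem_insert, Fin.ext_iff]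
    omega
  rw [prefixSum, this, sum_insert (by simp), add_comm]
  rfl

lemma prefixSum_of_le {r : ℕ} (hr : n ≤ r) : prefixSum c r = ∑ j, c j := by
  rw [prefixSum, filter_true_of_mem fun j _ => j.2.trans_le hr]

lemma prefixSum_congr {c d : Fin n → ℕ} {r : ℕ} (h : ∀ j : Fin n, (j : ℕ) < r → c j = d j) :
    prefixSum c r = prefixSum d r :=
  sum_congr rfl fun j hj => h j (mem_filter.1 hj).2

end PrefixSum

def Dominates (c b : Fin n → ℕ) : Prop :=
  (∀ r, prefixSum b r ≤ prefixSum c r) ∧ ∑ j, c j = ∑ j, b j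

lemma Dominates.exists_excess_deficit {c b : Fin n → ℕ} (h : Dominates c b) (hne : c ≠ b) :
    ∃ j k : Fin n, j < k ∧ b j < c j ∧ c k < b k ∧
      ∀ r : ℕ, (j : ℕ) < r → r ≤ k → prefixSum b r < prefixSum c r := by
  obtain ⟨j, hj, hj_min⟩ := exists_min_image {x | c x ≠ b x} id (by
    obtain ⟨x, hx⟩ := Function.ne_iff.1 hne
    exact ⟨x, by simpa using hx⟩)
  simp only [mem_filter, mem_univ, true_and, id] at hj hj_min
  have hagree : ∀ x : Fin n, (x : ℕ) < j → b x = c x := fun x hx => by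
    by_contra hx'
    exact absurd (hj_min x (Ne.symm hx')) (not_le.2 hx)
  have hbj : b j < c j := by
    have := h.1 (j + 1)
    rw [prefixSum_succ _ j, prefixSum_succ _ j, prefixSum_congr hagree] at this
    omega
  obtain ⟨k, hk, hk_min⟩ := exists_min_image {x | c x < b x} id (by
    by_contra hempty
    have hle : ∀ x ∈ univ, b x ≤ c x := fun x _ => by
      by_contra hx
      exact hempty ⟨x, by simpa using hx⟩
    exact absurd h.2 (sum_lt_sum hle ⟨j, mem_univ j, hbj⟩).ne')
  simp only [mem_filter, mem_univ, true_and, id] at hk hk_min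
  have hjk : j < k := by
    refine lt_of_le_of_ne (hj_min k hk.ne) ?_
    rintro rfl
    omega
  refine ⟨j, k, hjk, hbj, hk, fun r hjr hrk => ?_⟩
  induction r, hjr using Nat.le_induction with
  | base =>
    rw [prefixSum_succ _ j, prefixSum_succ _ j, prefixSum_congr hagree]
    omega
  | succ r hjr ih =>
    have hrk' : r < k := hrk
    have hr := hrk'.trans k.2
    have : b ⟨r, hr⟩ ≤ c ⟨r, hr⟩ := not_lt.1 fun hlt => absurd (hk_min _ hlt) (not_le.2 hrk')
    have hb_succ : prefixSum b (r + 1) = prefixSum b r + b ⟨r, hr⟩ := prefixSum_succ b ⟨r, hr⟩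
    have hc_succ : prefixSum c (r + 1) = prefixSum c r + c ⟨r, hr⟩ := prefixSum_succ c ⟨r, hr⟩
    have := ih hrk'.le
    omega

section Move

variable [DecidableEq α] (M : α → Fin n → Bool) (i : α) (j k : Fin n)

def move : α → Fin n → Bool :=
  Function.update M i (Function.update (Function.update (M i) j false) k true)

variable {M i j k}

lemma rowSum_move (hj : M i j = true) (hk : M i k = false) : rowSum (move M i j k) = rowSum M := by
  funext i'
  rcases eq_or_ne i' i with rfl | hi'
  · have hjk : j ≠ k := by rintro rfl; simp_all
    have hset : univ.filter (fun x => move M i' j k i' x = true) =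
        insert k ((univ.filter fun x => M i' x = true).erase j) := by
      ext x
      by_cases hxk : x = k
      · simp [move, hxk]
      · by_cases hxj : x = j <;> simp [move, hxj, hxk, hjk]
    rw [rowSum, rowSum, hset, card_insert_of_notMem (by simp [hk]),
      card_erase_add_one (by simp [hj])]
  · simp [rowSum, move, hi']

lemma colSum_move_add [Fintype α] (hj : M i j = true) (hk : M i k = false) (x : Fin n) :
    colSum (move M i j k) x + (if x = j then 1 else 0) = colSum M x + (if x = k then 1 else 0) := by
  simp only [colSum, card_filter, ← add_sum_erase univ _ (mem_univ i)]
  have hrest : ∑ i' ∈ univ.erase i, (if move M i j k i' x = true then 1 else 0) =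
      ∑ i' ∈ univ.erase i, (if M i' x = true then 1 else 0) :=
    sum_congr rfl fun i' hi' => by simp [move, ne_of_mem_erase hi']
  rw [hrest]
  by_cases hxk : x = k
  · subst hxk
    have hjk : j ≠ x := by rintro rfl; simp_all
    simp [move, hk, hjk.symm, add_comm]
  · by_cases hxj : x = j
    · subst hxj; simp [move, hj, hxk, add_comm]
    · simp [move, hxj, hxk]

lemma prefixSum_colSum_move_add [Fintype α] (hj : M i j = true) (hk : M i k = false) (r : ℕ) :
    prefixSum (colSum (move M i j k)) r + (if (j : ℕ) < r then 1 else 0) =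
      prefixSum (colSum M) r + (if (k : ℕ) < r then 1 else 0) := by
  have := sum_congr rfl fun x (_ : x ∈ univ.filter fun x : Fin n => x.val < r) =>
    colSum_move_add hj hk x
  simp only [sum_add_distrib, sum_ite_eq', mem_filter, mem_univ, true_and] at this
  exact this

lemma sum_prefixSum_colSum_move_lt [Fintype α] (hj : M i j = true) (hk : M i k = false)
    (hjk : j < k) :
    ∑ r ∈ range n, prefixSum (colSum (move M i j k)) r <
      ∑ r ∈ range n, prefixSum (colSum M) r := by
  have hjk : (j : ℕ) < k := hjk
  refine sum_lt_sum (fun r _ => ?_) ⟨k, mem_range.2 k.2, ?_⟩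
  · have := prefixSum_colSum_move_add hj hk r
    split_ifs at this <;> omega
  · have := prefixSum_colSum_move_add hj hk k
    rw [if_pos hjk, if_neg (lt_irrefl _)] at this
    omega

lemma Dominates.move [Fintype α] {b : Fin n → ℕ} (h : Dominates (colSum M) b) (hj : M i j = true)
    (hk : M i k = false) (hjk : j < k)
    (hlt : ∀ r : ℕ, (j : ℕ) < r → r ≤ k → prefixSum b r < prefixSum (colSum M) r) :
    Dominates (colSum (move M i j k)) b := by
  have hjk : (j : ℕ) < k := hjk
  refine ⟨fun r => ?_, ?_⟩
  · have hmove := prefixSum_colSum_move_add hj hk r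
    have hdom := h.1 r
    by_cases hjr : (j : ℕ) < r
    · by_cases hkr : (k : ℕ) < r
      · simp only [if_pos hjr, if_pos hkr] at hmove; omega
      · have := hlt r hjr (not_lt.1 hkr)
        simp only [if_pos hjr, if_neg hkr] at hmove; omega
    · simp only [if_neg hjr, if_neg fun hkr : (k : ℕ) < r => hjr (hjk.trans hkr)] at hmove
      omega
  · have := prefixSum_colSum_move_add hj hk n
    simp only [prefixSum_of_le _ le_rfl, if_pos j.2, if_pos k.2] at this
    exact (add_right_cancel this).trans h.2

end Move

lemma exists_apply_true_apply_false_of_colSum_lt [Fintype α] {M : α → Fin n → Bool} {j k : Fin n}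
    (h : colSum M k < colSum M j) : ∃ i, M i j = true ∧ M i k = false := by
  by_contra! hcon
  refine h.not_ge (card_le_card fun i hi => ?_)
  simp only [mem_filter, mem_univ, true_and] at hi ⊢
  simpa using hcon i hi

theorem exists_rowSum_colSum_of_dominates [Fintype α] [DecidableEq α] {b : Fin n → ℕ}
    (hb : Antitone b) (M : α → Fin n → Bool) (h : Dominates (colSum M) b) :
    ∃ M' : α → Fin n → Bool, rowSum M' = rowSum M ∧ colSum M' = b := by
  induction hΦ : ∑ r ∈ range n, prefixSum (colSum M) r using Nat.strong_induction_on
    generalizing M with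
  | _ N ih =>
  by_cases hcb : colSum M = b
  · exact ⟨M, rfl, hcb⟩
  obtain ⟨j, k, hjk, hbj, hbk, hlt⟩ := h.exists_excess_deficit hcb
  -- `colSum M k < b k ≤ b j < colSum M j`
  obtain ⟨i, hj, hk⟩ := exists_apply_true_apply_false_of_colSum_lt (hbk.trans_le <|
    (hb hjk.le).trans hbj.le)
  obtain ⟨M', hrow, hcol⟩ := ih _ (hΦ ▸ sum_prefixSum_colSum_move_lt hj hk hjk) (move M i j k)
    (h.move hj hk hjk hlt) rfl
  exact ⟨M', hrow.trans (rowSum_move hj hk), hcol⟩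

section Counting

variable [Fintype α]

lemma sum_rowSum_eq_sum_colSum (M : α → Fin n → Bool) : ∑ i, rowSum M i = ∑ j, colSum M j := by
  simp only [rowSum, colSum, card_filter]
  exact sum_comm

lemma prefixSum_colSum (M : α → Fin n → Bool) (r : ℕ) :
    prefixSum (colSum M) r = ∑ i, #{j : Fin n | j.val < r ∧ M i j = true} := by
  simp only [prefixSum, colSum, ← filter_filter, card_filter]
  exact sum_comm

lemma prefixSum_colSum_le (M : α → Fin n → Bool) (r : ℕ) :
    prefixSum (colSum M) r ≤ ∑ i, min (rowSum M i) r := by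
  rw [prefixSum_colSum]
  gcongr with i
  refine le_min (card_le_card fun j => by simp +contextual) ?_
  calc #{j : Fin n | j.val < r ∧ M i j = true} ≤ #{j : Fin n | j.val < r} :=
        card_le_card fun j => by simp +contextual
    _ ≤ r := Fin.card_filter_val_lt.trans_le (min_le_right _ _)

lemma sum_Icc_card_le_eq_sum_min (a : α → ℕ) (r : ℕ) :
    ∑ s ∈ Icc 1 r, #{i | s ≤ a i} = ∑ i, min (a i) r := by
  simp only [card_filter]
  rw [sum_comm]
  refine sum_congr rfl fun i _ => ?_
  rw [← card_filter, show {s ∈ Icc 1 r | s ≤ a i} = Icc 1 (min (a i) r) by ext; simp; omega,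
    Nat.card_Icc, Nat.add_sub_cancel]

end Counting

def leftJustified (a : α → ℕ) : α → Fin n → Bool := fun i j => decide ((j : ℕ) < a i)

lemma rowSum_leftJustified (a : α → ℕ) (i : α) :
    rowSum (leftJustified (n := n) a) i = min n (a i) := by
  simp [rowSum, leftJustified, Fin.card_filter_val_lt]

lemma prefixSum_colSum_leftJustified [Fintype α] {a : α → ℕ} (ha : ∀ i, a i ≤ n) (r : ℕ) :
    prefixSum (colSum (leftJustified (n := n) a)) r = ∑ i, min (a i) r := by
  rw [prefixSum_colSum]
  refine sum_congr rfl fun i _ => ?_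
  simp only [leftJustified, decide_eq_true_eq, ← lt_min_iff, Fin.card_filter_val_lt]
  have := ha i
  omega

section Sufficiency

variable [Fintype α] {a : α → ℕ} {b : Fin n → ℕ}

lemma le_of_sum_le_sum_min (h : ∑ i, a i ≤ ∑ i, min (a i) n) (i : α) : a i ≤ n := by
  have hmin : ∑ i, min (a i) n = ∑ i, a i :=
    le_antisymm (sum_le_sum fun i _ => min_le_left _ _) h
  have := (sum_eq_sum_iff_of_le fun i _ => min_le_left (a i) n).1 hmin i (mem_univ i)
  omega

lemma dominates_colSum_leftJustified (ha : ∀ i, a i ≤ n) (hsum : ∑ i, a i = ∑ j, b j)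
    (h : ∀ r ≤ n, prefixSum b r ≤ ∑ i, min (a i) r) :
    Dominates (colSum (leftJustified (n := n) a)) b := by
  have htotal : ∑ j, colSum (leftJustified (n := n) a) j = ∑ j, b j := by
    rw [← prefixSum_of_le _ le_rfl, prefixSum_colSum_leftJustified ha, ← hsum]
    exact sum_congr rfl fun i _ => min_eq_left (ha i)
  refine ⟨fun r => ?_, htotal⟩
  rcases le_or_gt r n with hr | hr
  · exact (h r hr).trans_eq (prefixSum_colSum_leftJustified ha r).symm
  · rw [prefixSum_of_le _ hr.le, prefixSum_of_le _ hr.le, htotal]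

end Sufficiency

end GaleRyser

open GaleRyser Finset in
/-- Gale–Ryser theorem in column-sum (conjugate-partition) form. -/
theorem stmt1 (m n : ℕ) (a : Fin m → ℕ) (b : Fin n → ℕ) (hb : Antitone b) :
    (∃ M : Fin m → Fin n → Bool,
      (∀ i, (Finset.univ.filter (fun j => M i j = true)).card = a i) ∧
      (∀ j, (Finset.univ.filter (fun i => M i j = true)).card = b j)) ↔
    ((∑ i, a i = ∑ j, b j) ∧
      ∀ r ∈ Finset.Icc 1 n,
        ∑ j ∈ Finset.univ.filter (fun j : Fin n => (j : ℕ) < r), b j ≤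
          ∑ j ∈ Finset.Icc 1 r,
            (Finset.univ.filter (fun i : Fin m => j ≤ a i)).card) := by
  simp only [sum_Icc_card_le_eq_sum_min]
  constructor
  · rintro ⟨M, hrow, hcol⟩
    obtain rfl : a = rowSum M := funext fun i => (hrow i).symm
    obtain rfl : b = colSum M := funext fun j => (hcol j).symm
    exact ⟨sum_rowSum_eq_sum_colSum M, fun r _ => prefixSum_colSum_le M r⟩
  · rintro ⟨hsum, hcond⟩
    have hcond' : ∀ r ≤ n, prefixSum b r ≤ ∑ i, min (a i) r := fun r hr => by
      rcases r.eq_zero_or_pos with rfl | hr0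
      · simp
      · exact hcond r (mem_Icc.2 ⟨hr0, hr⟩)
    have ha : ∀ i, a i ≤ n := le_of_sum_le_sum_min <| by
      rw [hsum, ← prefixSum_of_le b le_rfl]
      exact hcond' n le_rfl
    obtain ⟨M, hrow, hcol⟩ := exists_rowSum_colSum_of_dominates hb _
      (dominates_colSum_leftJustified ha hsum hcond')
    refine ⟨M, fun i => ?_, congrFun hcol⟩
    rw [← min_eq_right (ha i), ← rowSum_leftJustified]
    exact congrFun hrow i
end

section
/- If there exists an m×n binary matrix with row sums a and column sums b (b non-increasing), then for every r ∈ {1,…,n}, the dominance condition Σ_i min(a_i, r) ≥ Σ_{j=1}^r b_j holds. -/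
/-- 'Only if' direction of Gale–Ryser: existence of a binary matrix with row sums `a`
and non-increasing column sums `b` implies the dominance condition
`Σ_i min(a_i, r) ≥ Σ_{j=1}^r b_j` for every `r ∈ {1,…,n}`. -/
theorem stmt2 (m n : ℕ) (a : Fin m → ℕ) (b : Fin n → ℕ) (hb : Antitone b)
    (M : Fin m → Fin n → Bool)
    (hrow : ∀ i, (Finset.univ.filter (fun j => M i j = true)).card = a i)
    (hcol : ∀ j, (Finset.univ.filter (fun i => M i j = true)).card = b j) :
    ∀ r ∈ Finset.Icc 1 n,
      ∑ j ∈ Finset.univ.filter (fun j : Fin n => (j : ℕ) < r), b j ≤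
        ∑ i, min (a i) r := by
  intro r hr
  simp only [Finset.mem_Icc] at hr
  set S := Finset.univ.filter (fun j : Fin n => (j : ℕ) < r) with hS
  have hcard : S.card = r := by
    have hr1 : r - 1 < n := by omega
    have : S = Finset.Iic ⟨r - 1, hr1⟩ := by
      ext j; simp only [hS, Finset.mem_filter, Finset.mem_univ, true_and, Finset.mem_Iic, Fin.le_def, Fin.val_mk]; omega
    rw [this, Fin.card_Iic]; simp only [Fin.val_mk]; omega
  calc ∑ j ∈ S, b j = ∑ j ∈ S, ∑ i : Fin m, (if M i j then 1 else 0) := by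
        refine Finset.sum_congr rfl fun j _ => ?_
        rw [← hcol j, Finset.card_filter]
    _ = ∑ i : Fin m, ∑ j ∈ S, (if M i j then 1 else 0) := Finset.sum_comm
    _ ≤ ∑ i, min (a i) r := by
        refine Finset.sum_le_sum fun i _ => ?_
        rw [← Finset.card_filter]
        refine le_min ?_ ?_
        · rw [← hrow i]
          exact Finset.card_le_card (Finset.filter_subset_filter _ (Finset.filter_subset _ _)) |>.trans (le_of_eq rfl)
        · rw [← hcard]
          exact Finset.card_filter_le _ _
end

section
/- Let a ∈ ℕ^m and b ∈ ℕ^n be degree sequences admitting a bipartite graph, with b non-increasing and b_1 ≥ 1. Then there exists a way to connect the vertex of degree b_1 to exactly b_1 distinct vertices on the a-side such that after decrementing those a-degrees by 1 and removing b_1, the resulting pair of degree sequences again admits a bipartite graph. -/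
/-- There is a bipartite graph with degree sequences `a` (left side) and `b` (right side):
a 0-1 matrix with row sums `a` and column sums `b`. -/
def hasBG (m n : ℕ) (a : Fin m → ℕ) (b : Fin n → ℕ) : Prop :=
  ∃ M : Fin m → Fin n → Bool,
    (∀ i, (Finset.univ.filter (fun j => M i j = true)).card = a i) ∧
    (∀ j, (Finset.univ.filter (fun i => M i j = true)).card = b j)

/-- If `(a, b)` admits a bipartite graph, `b` is non-increasing and `b 0 ≥ 1`, then the node
of degree `b 0` can be connected to `b 0` distinct `a`-side vertices (each of degree ≥ 1) so
that the updated degree sequences again admit a bipartite graph. -/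
theorem stmt3 (m n : ℕ) (a : Fin m → ℕ) (b : Fin (n + 1) → ℕ)
    (hb : Antitone b) (hb1 : 1 ≤ b 0) (hfeas : hasBG m (n + 1) a b) :
    ∃ S : Finset (Fin m), S.card = b 0 ∧ (∀ i ∈ S, 1 ≤ a i) ∧
      hasBG m n (fun i => a i - (if i ∈ S then 1 else 0)) (fun j => b j.succ) := by
  obtain ⟨M, hrow, hcol⟩ := hfeas
  refine ⟨Finset.univ.filter (fun i => M i 0 = true), hcol 0, ?_, ?_⟩
  · intro i hi
    rw [Finset.mem_filter] at hi
    have h0 : (0 : Fin (n + 1)) ∈ Finset.univ.filter (fun j => M i j = true) := by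
      simp [hi.2]
    calc 1 ≤ (Finset.univ.filter (fun j => M i j = true)).card :=
          Finset.card_pos.mpr ⟨0, h0⟩
      _ = a i := hrow i
  · refine ⟨fun i j => M i j.succ, ?_, ?_⟩
    · intro i
      have h1 : (Finset.univ.filter (fun j : Fin (n+1) => M i j = true)).card
          = (if M i 0 = true then 1 else 0)
            + (Finset.univ.filter (fun j : Fin n => M i j.succ = true)).card := by
        rw [Finset.card_filter, Finset.card_filter, Fin.sum_univ_succ]
      have h2 := hrow i
      rw [h1] at h2
      simp only [Finset.mem_filter, Finset.mem_univ, true_and]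
      by_cases hM : M i 0 = true <;> simp only [hM, if_true, if_false] at h2 ⊢ <;> omega
    · intro j
      exact hcol j.succ
end

section
/- Let a ∈ ℕ^m admit a bipartite graph with non-increasing b ∈ ℕ^n. Suppose the vertex b_1 connects to the b_1 largest-degree vertices of a (ties broken arbitrarily), i.e., greedily from the highest degree group downward. Then the updated degree sequences (a with those entries decremented, zeros removed; b without b_1) again admit a bipartite graph. -/
/-!
Among all realizations of `(a, b)` take one whose first column misses as few vertices of `S`
as possible. If its first column is not exactly `S`, then, both having `b 0` elements, it
misses some `i₀ ∈ S` and contains some `i₁ ∉ S`. Since `a i₁ ≤ a i₀` and `i₁` uses the first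
column while `i₀` does not, some other column `j` is used by `i₀` but not by `i₁`; switching the
four entries at rows `i₀, i₁` and columns `0, j` keeps all degrees and misses one vertex of `S`
fewer. Once the first column is `S`, deleting it realizes the residual pair.
-/

open Finset

namespace Biadjacency

variable {α β : Type*} [Fintype α] [Fintype β] [DecidableEq α] [DecidableEq β]

def Realizes (M : α → β → Bool) (a : α → ℕ) (b : β → ℕ) : Prop :=
  (∀ i, #{j | M i j = true} = a i) ∧ (∀ j, #{i | M i j = true} = b j)

def switch (M : α → β → Bool) (i₀ i₁ : α) (j₀ j₁ : β) (i : α) (j : β) : Bool :=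
  if (i = i₀ ∨ i = i₁) ∧ (j = j₀ ∨ j = j₁) then !M i j else M i j

omit [Fintype α] [Fintype β] in
theorem switch_flip (M : α → β → Bool) (i₀ i₁ : α) (j₀ j₁ : β) (i : α) (j : β) :
    switch (flip M) j₀ j₁ i₀ i₁ j i = switch M i₀ i₁ j₀ j₁ i j := by
  simp only [switch, flip, and_comm]

variable {M : α → β → Bool} {a : α → ℕ} {b : β → ℕ}

omit [Fintype α] [DecidableEq α] in
theorem card_filter_eq_of_exchange {f g : β → Bool} {x y : β} (hfx : f x = true)
    (hfy : f y = false) (hgx : g x = false) (hgy : g y = true)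
    (hfg : ∀ z, z ≠ x → z ≠ y → g z = f z) :
    #{z | g z = true} = #{z | f z = true} := by
  have hxy : x ≠ y := by rintro rfl; simp_all
  have hx : x ∈ ({z | f z = true} : Finset β) := by simpa using hfx
  have hy : y ∉ ({z | f z = true} : Finset β).erase x := by simp [hfy]
  have hset :
      ({z | g z = true} : Finset β) = insert y (({z | f z = true} : Finset β).erase x) := by
    ext z
    by_cases hzx : z = x
    · subst hzx; simp [hgx, hxy]
    by_cases hzy : z = y
    · subst hzy; simp [hgy]
    simp [hzx, hzy, hfg z hzx hzy]
  rw [hset, card_insert_of_notMem hy, card_erase_add_one hx]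

omit [Fintype α] in
theorem card_row_switch {i₀ i₁ : α} {j₀ j₁ : β}
    (h₀₀ : M i₀ j₀ = false) (h₀₁ : M i₀ j₁ = true) (h₁₀ : M i₁ j₀ = true)
    (h₁₁ : M i₁ j₁ = false) (i : α) :
    #{j | switch M i₀ i₁ j₀ j₁ i j = true} = #{j | M i j = true} := by
  by_cases hi₀ : i = i₀
  · subst hi₀
    exact card_filter_eq_of_exchange h₀₁ h₀₀ (by simp [switch, h₀₁]) (by simp [switch, h₀₀])
      fun z hz₁ hz₀ => by simp [switch, hz₀, hz₁]
  by_cases hi₁ : i = i₁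
  · subst hi₁
    exact card_filter_eq_of_exchange h₁₀ h₁₁ (by simp [switch, h₁₀]) (by simp [switch, h₁₁])
      fun z hz₀ hz₁ => by simp [switch, hz₀, hz₁]
  simp [switch, hi₀, hi₁]

theorem realizes_switch (hM : Realizes M a b)
    {i₀ i₁ : α} {j₀ j₁ : β} (h₀₀ : M i₀ j₀ = false) (h₀₁ : M i₀ j₁ = true)
    (h₁₀ : M i₁ j₀ = true) (h₁₁ : M i₁ j₁ = false) :
    Realizes (switch M i₀ i₁ j₀ j₁) a b := by
  refine ⟨fun i => (card_row_switch h₀₀ h₀₁ h₁₀ h₁₁ i).trans (hM.1 i), fun j => ?_⟩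
  simp_rw [← switch_flip M i₀ i₁ j₀ j₁]
  exact (card_row_switch (M := flip M) h₀₀ h₁₀ h₀₁ h₁₁ j).trans (hM.2 j)

omit [Fintype α] [DecidableEq α] [DecidableEq β] in
theorem exists_mem_row_not_mem_row {i₀ i₁ : α} {c : β}
    (h₀ : M i₀ c = false) (h₁ : M i₁ c = true)
    (hdeg : #{j | M i₁ j = true} ≤ #{j | M i₀ j = true}) :
    ∃ j, M i₀ j = true ∧ M i₁ j = false := by
  by_contra! hsub
  have hssub : ({j | M i₀ j = true} : Finset β) ⊂ ({j | M i₁ j = true} : Finset β) := by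
    rw [ssubset_iff_of_subset fun j hj => by simpa using hsub j (by simpa using hj)]
    exact ⟨c, by simpa using h₁, by simp [h₀]⟩
  exact (card_lt_card hssub).not_ge hdeg

theorem Realizes.exists_realizes_card_missing_lt (hM : Realizes M a b) {c : β} {S : Finset α}
    (hcard : #S = b c) (hmax : ∀ i ∈ S, ∀ i' ∉ S, a i' ≤ a i)
    (hne : ¬ ∀ i, M i c = true ↔ i ∈ S) :
    ∃ M', Realizes M' a b ∧ #{i ∈ S | M' i c = false} < #{i ∈ S | M i c = false} := by
  set T : Finset α := {i | M i c = true}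
  have hTS : T ≠ S := fun h => hne fun i => by simp [← h, T]
  have hcardT : #T = #S := (hM.2 c).trans hcard.symm
  obtain ⟨i₀, hi₀S, hi₀T⟩ : ∃ i ∈ S, i ∉ T :=
    not_subset.mp fun h => hTS (eq_of_subset_of_card_le h hcardT.le).symm
  obtain ⟨i₁, hi₁T, hi₁S⟩ : ∃ i ∈ T, i ∉ S :=
    not_subset.mp fun h => hTS (eq_of_subset_of_card_le h hcardT.ge)
  have h₀ : M i₀ c = false := by simpa [T] using hi₀T
  have h₁ : M i₁ c = true := by simpa [T] using hi₁T
  obtain ⟨j, h₀j, h₁j⟩ := exists_mem_row_not_mem_row h₀ h₁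
    (by rw [hM.1, hM.1]; exact hmax i₀ hi₀S i₁ hi₁S)
  refine ⟨switch M i₀ i₁ c j, realizes_switch hM h₀ h₀j h₁ h₁j, card_lt_card ?_⟩
  rw [ssubset_iff_of_subset]
  · exact ⟨i₀, by simp [hi₀S, h₀], by simp [switch, h₀]⟩
  · intro i hi
    rw [mem_filter] at hi ⊢
    have hi₁ : i ≠ i₁ := by rintro rfl; exact hi₁S hi.1
    by_cases hi₀ : i = i₀ <;> simp_all [switch]

theorem Realizes.exists_realizes_column_eq (hM : Realizes M a b) {c : β}
    {S : Finset α} (hcard : #S = b c) (hmax : ∀ i ∈ S, ∀ i' ∉ S, a i' ≤ a i) :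
    ∃ M', Realizes M' a b ∧ ∀ i, M' i c = true ↔ i ∈ S := by
  induction h : #{i ∈ S | M i c = false} using Nat.strong_induction_on generalizing M with
  | _ k ih =>
    by_cases hS : ∀ i, M i c = true ↔ i ∈ S
    · exact ⟨M, hM, hS⟩
    obtain ⟨M', hM', hlt⟩ := hM.exists_realizes_card_missing_lt hcard hmax hS
    exact ih _ (h ▸ hlt) hM' rfl

omit [Fintype β] [DecidableEq β] in
theorem Realizes.tail {n : ℕ} {M : α → Fin (n + 1) → Bool} {b : Fin (n + 1) → ℕ}
    (hM : Realizes M a b) {S : Finset α} (hS : ∀ i, M i 0 = true ↔ i ∈ S) :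
    Realizes (fun i (j : Fin n) => M i j.succ) (fun i => a i - if i ∈ S then 1 else 0)
      (fun j : Fin n => b j.succ) := by
  refine ⟨fun i => ?_, fun j => hM.2 j.succ⟩
  have hrow := Fin.card_filter_univ_succ' (fun j => M i j = true)
  simp only [hM.1 i, hS i] at hrow
  dsimp only
  split_ifs at hrow ⊢ <;> omega

end Biadjacency

open Biadjacency in
theorem stmt4_general (m n : ℕ) (a : Fin m → ℕ) (b : Fin (n + 1) → ℕ)
    (hfeas : hasBG m (n + 1) a b)
    (S : Finset (Fin m)) (hcard : S.card = b 0)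
    (hmax : ∀ i ∈ S, ∀ i' ∉ S, a i' ≤ a i) :
    hasBG m n (fun i => a i - (if i ∈ S then 1 else 0)) (fun j => b j.succ) := by
  obtain ⟨M, hM⟩ := hfeas
  obtain ⟨M', hM', hS⟩ := Realizes.exists_realizes_column_eq hM hcard hmax
  exact ⟨_, hM'.tail hS⟩

/-- Standard greedy step: if `(a, b)` is feasible (`b` non-increasing) and the node `b 0`
is connected to a set `S` of `b 0` vertices of largest degree on the `a`-side (ties broken
arbitrarily), then the updated degree sequences again admit a bipartite graph. -/
theorem stmt4 (m n : ℕ) (a : Fin m → ℕ) (b : Fin (n + 1) → ℕ)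
    (hb : Antitone b) (hfeas : hasBG m (n + 1) a b)
    (S : Finset (Fin m)) (hcard : S.card = b 0)
    (hmax : ∀ i ∈ S, ∀ i' ∉ S, a i' ≤ a i) :
    hasBG m n (fun i => a i - (if i ∈ S then 1 else 0)) (fun j => b j.succ) :=
  stmt4_general m n a b hfeas S hcard hmax
end

section
/- Let a ∈ ℕ^m and b ∈ ℕ^n (b non-increasing) with Σa_i = Σb_j, and let z be the conjugate of a (z_j = |{i : a_i ≥ j}|). Suppose b_1 is allocated across the degree groups of a, choosing F(k) vertices from the group of m_k vertices of degree α_k, with Σ_k F(k) = b_1 and 0 ≤ F(k) ≤ m_k. Let z' be the conjugate of the updated a. Then for each r, Σ_{j=1}^r z'_j = Σ_{j=1}^r z_j − Σ_{k : α_k ≤ r} F(k). -/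
lemma sum_indicator_Icc (r c : ℕ) :
    ∑ j ∈ Finset.Icc 1 r, (if j ≤ c then (1 : ℤ) else 0) = (c : ℤ) ⊓ (r : ℤ) := by
  rw [Finset.sum_ite, Finset.sum_const, Finset.sum_const]
  have h : (Finset.Icc 1 r).filter (fun j => j ≤ c) = Finset.Icc 1 (min c r) := by
    ext j; simp [Finset.mem_filter]; omega
  rw [h]
  simp [Nat.card_Icc]

/-- Conjugate-vector bookkeeping identity: if the node `b 1` is allocated to a set `S` of
`a`-side vertices of positive degree (choosing `F(d) = |{i ∈ S : a i = d}|` vertices from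
the group of degree `d`), and `z`, `z'` denote the conjugates of `a` and of the updated
sequence, then for every `r`,
`Σ_{j=1}^r z'_j = Σ_{j=1}^r z_j − Σ_{d ≤ r} F(d)`. -/
theorem stmt5 (m : ℕ) (a : Fin m → ℕ) (S : Finset (Fin m)) (hS : ∀ i ∈ S, 1 ≤ a i)
    (r : ℕ) :
    (∑ j ∈ Finset.Icc 1 r,
        ((Finset.univ.filter
          (fun i : Fin m => j ≤ a i - (if i ∈ S then 1 else 0))).card : ℤ))
      = (∑ j ∈ Finset.Icc 1 r,
          ((Finset.univ.filter (fun i : Fin m => j ≤ a i)).card : ℤ))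
        - ∑ d ∈ Finset.Icc 1 r, ((S.filter (fun i => a i = d)).card : ℤ) := by
  have hcard : ∀ (j : ℕ) (f : Fin m → ℕ),
      ((Finset.univ.filter (fun i : Fin m => j ≤ f i)).card : ℤ)
        = ∑ i : Fin m, (if j ≤ f i then (1 : ℤ) else 0) := by
    intro j f
    rw [Finset.card_filter]
    push_cast
    rfl
  have hcard2 : ∀ d : ℕ, ((S.filter (fun i => a i = d)).card : ℤ)
      = ∑ i ∈ S, (if a i = d then (1 : ℤ) else 0) := by
    intro d
    rw [Finset.card_filter]
    push_cast
    rfl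
  simp only [hcard, hcard2]
  rw [Finset.sum_comm, Finset.sum_comm (s := Finset.Icc 1 r) (t := Finset.univ),
    Finset.sum_comm (s := Finset.Icc 1 r) (t := S)]
  have hR : ∀ i ∈ S, ∑ d ∈ Finset.Icc 1 r, (if a i = d then (1 : ℤ) else 0)
      = (if a i ∈ Finset.Icc 1 r then (1 : ℤ) else 0) := by
    intro i _
    rw [Finset.sum_ite_eq (Finset.Icc 1 r) (a i) (fun _ => (1:ℤ))]
  rw [Finset.sum_congr rfl hR]
  simp only [sum_indicator_Icc]
  rw [← Finset.sum_filter_add_sum_filter_not Finset.univ (· ∈ S)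
      (fun i => ((a i : ℤ) ⊓ (r : ℤ))),
    ← Finset.sum_filter_add_sum_filter_not Finset.univ (· ∈ S)
      (fun i => ((a i - if i ∈ S then 1 else 0 : ℕ) : ℤ) ⊓ (r : ℤ))]
  have hfilt : Finset.univ.filter (· ∈ S) = S := by
    ext i; simp
  rw [hfilt]
  have h2 : ∀ i ∈ Finset.univ.filter (· ∉ S),
      ((a i - if i ∈ S then 1 else 0 : ℕ) : ℤ) ⊓ (r : ℤ) = (a i : ℤ) ⊓ (r : ℤ) := by
    intro i hi
    simp only [Finset.mem_filter] at hi
    simp [hi.2]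
  rw [Finset.sum_congr rfl h2]
  have key : ∑ x ∈ S, (((a x - if x ∈ S then 1 else 0 : ℕ) : ℤ) ⊓ (r : ℤ)
        + (if a x ∈ Finset.Icc 1 r then (1 : ℤ) else 0))
      = ∑ x ∈ S, ((a x : ℤ) ⊓ (r : ℤ)) := by
    apply Finset.sum_congr rfl
    intro i hi
    have h1 := hS i hi
    simp only [hi, if_true, Finset.mem_Icc]
    split <;> omega
  rw [Finset.sum_add_distrib] at key
  linarith
end

section
/- Let (a,b) be a feasible bipartite degree-sequence pair with b non-increasing, and fix any feasible partial allocation F(1),…,F(k−1) of b_1 to the first k−1 degree groups of a. Suppose from group k onward the remaining degree of b_1 is allocated greedily backward (highest groups first). Then the updated degree sequences after processing b_1 admit a bipartite graph. -/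
/-!
Among all completions of the partial allocation, take a neighbourhood `S` of `b 0` of maximal
total `a`-degree. If `i ∈ S` has degree `≥ c` and `i' ∉ S` has larger degree, the residual row
of `i'` has a one in a column where the row of `i` has a zero; moving that one shows that
`insert i' (S.erase i)` is again a completion, of larger total degree. So in degrees `≥ c` the
maximizer fills every degree group completely before using any lower group, and such group
counts obey the greedy recursion, which has only one solution.
-/

open Finset

lemma hasBG_transfer {m n : ℕ} {A A' : Fin m → ℕ} {b : Fin n → ℕ} {i i' : Fin m}
    (hlt : A i < A i') (h : hasBG m n A b) (hi : A' i = A i + 1) (hi' : A' i' = A i' - 1)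
    (hother : ∀ x, x ≠ i → x ≠ i' → A' x = A x) : hasBG m n A' b := by
  obtain ⟨M, hrow, hcol⟩ := h
  obtain ⟨j, hj', hj⟩ := exists_mem_notMem_of_card_lt_card
    (s := univ.filter (M i · = true)) (t := univ.filter (M i' · = true)) (by rwa [hrow, hrow])
  simp only [mem_filter, mem_univ, true_and, Bool.not_eq_true] at hj' hj
  -- column `j` of the new matrix is column `j` of `M` with rows `i` and `i'` swapped
  refine ⟨fun x y => if y = j then M (Equiv.swap i i' x) j else M x y,
    fun x => ?_, fun y => ?_⟩
  · by_cases hxi : x = i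
    · subst hxi
      have : univ.filter (fun y => (if y = j then M (Equiv.swap x i' x) j else M x y) = true)
          = insert j (univ.filter (M x · = true)) := by
        ext y; by_cases hy : y = j <;> simp [hy, hj']
      rw [this, card_insert_of_notMem (by simp [hj]), hrow, hi]
    by_cases hxi' : x = i'
    · subst hxi'
      have : univ.filter (fun y => (if y = j then M (Equiv.swap i x x) j else M x y) = true)
          = (univ.filter (M x · = true)).erase j := by
        ext y; by_cases hy : y = j <;> simp [hy, hj]
      rw [this, card_erase_of_mem (by simp [hj']), hrow, hi']
    · rw [hother x hxi hxi', ← hrow]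
      congr 1; ext y
      by_cases hy : y = j <;> simp [hy, Equiv.swap_apply_of_ne_of_ne hxi hxi']
  · by_cases hy : y = j
    · subst hy
      rw [← hcol]
      exact card_equiv (Equiv.swap i i') (by simp)
    · simp only [hy, if_false, hcol]

def decrementOn {m : ℕ} (a : Fin m → ℕ) (S : Finset (Fin m)) : Fin m → ℕ :=
  fun x => a x - if x ∈ S then 1 else 0

lemma hasBG_decrementOn_swap {m n : ℕ} {a : Fin m → ℕ} {b : Fin n → ℕ} {S : Finset (Fin m)}
    {i i' : Fin m} (hi : i ∈ S) (hi' : i' ∉ S) (hai : 1 ≤ a i) (hle : a i ≤ a i')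
    (h : hasBG m n (decrementOn a S) b) :
    hasBG m n (decrementOn a (insert i' (S.erase i))) b := by
  have hii' : i ≠ i' := fun h => hi' (h ▸ hi)
  refine hasBG_transfer (i := i) (i' := i') ?_ h ?_ ?_ fun x hx hx' => ?_
  · simp [decrementOn, hi, hi']; omega
  · simp [decrementOn, hi, hii']; omega
  · simp [decrementOn, hi']
  · simp [decrementOn, hx, hx']

lemma exists_swap_stable {ι : Type*} [Fintype ι] [DecidableEq ι] (a : ι → ℕ) (Q : ι → Prop)
    (P : Finset ι → Prop)
    (hP : ∀ S i i', P S → i ∈ S → i' ∉ S → Q i → a i < a i' → P (insert i' (S.erase i)))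
    (h : ∃ S, P S) : ∃ S, P S ∧ ∀ i ∈ S, ∀ i' ∉ S, Q i → a i' ≤ a i := by
  classical
  obtain ⟨S₀, hS₀⟩ := h
  obtain ⟨S, hS, hmax⟩ := exists_max_image (univ.filter P) (fun S => ∑ i ∈ S, a i)
    ⟨S₀, by simpa using hS₀⟩
  simp only [mem_filter, mem_univ, true_and] at hS hmax
  refine ⟨S, hS, fun i hi i' hi' hQ => not_lt.mp fun hlt => ?_⟩
  have hswap := hmax _ (hP S i i' hS hi hi' hQ hlt)
  rw [sum_insert (fun h => hi' (mem_of_mem_erase h)), ← add_sum_erase S a hi] at hswap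
  omega

lemma card_filter_eq_zero_of_swap_stable {ι : Type*} [Fintype ι] [DecidableEq ι] {a : ι → ℕ}
    {c d d' : ℕ} {S : Finset ι} (hstable : ∀ i ∈ S, ∀ i' ∉ S, c ≤ a i → a i' ≤ a i)
    (hcd' : c ≤ d') (hd'd : d' < d) (hlt : #(S.filter (a · = d)) < #(univ.filter (a · = d))) :
    #(S.filter (a · = d')) = 0 := by
  obtain ⟨i', hi', hi'S⟩ := exists_mem_notMem_of_card_lt_card hlt
  by_contra hne
  obtain ⟨i, hi⟩ := card_ne_zero.mp hne
  simp only [mem_filter, mem_univ, true_and] at hi hi' hi'S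
  have := hstable i hi.1 i' (fun h => hi'S ⟨h, hi'⟩) (by omega)
  omega

def IsFeasibleNbhd {m n : ℕ} (c : ℕ) (F : ℕ → ℕ) (k : ℕ) (a : Fin m → ℕ) (b : Fin n → ℕ)
    (S : Finset (Fin m)) : Prop :=
  (∀ d < c, #(S.filter (a · = d)) = F d) ∧ #S = k ∧ (∀ i ∈ S, 1 ≤ a i) ∧
    hasBG m n (decrementOn a S) b

lemma IsFeasibleNbhd.swap {m n c k : ℕ} {F : ℕ → ℕ} {a : Fin m → ℕ} {b : Fin n → ℕ}
    {S : Finset (Fin m)} {i i' : Fin m} (hS : IsFeasibleNbhd c F k a b S) (hi : i ∈ S)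
    (hi' : i' ∉ S) (hc : c ≤ a i) (hlt : a i < a i') :
    IsFeasibleNbhd c F k a b (insert i' (S.erase i)) := by
  obtain ⟨hlow, hcard, hpos, hbg⟩ := hS
  have hi'e : i' ∉ S.erase i := fun h => hi' (mem_of_mem_erase h)
  refine ⟨fun d hd => ?_, ?_, fun x hx => ?_,
    hasBG_decrementOn_swap hi hi' (hpos i hi) hlt.le hbg⟩
  · rw [← hlow d hd, filter_insert, if_neg (by omega), filter_erase,
      erase_eq_of_notMem (by simp; omega)]
  · rw [card_insert_of_notMem hi'e, card_erase_of_mem hi, hcard]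
    have := card_pos.mpr ⟨i, hi⟩
    omega
  · rcases mem_insert.mp hx with rfl | hx
    · omega
    · exact hpos x (mem_of_mem_erase hx)

lemma eq_of_greedy {f g F : ℕ → ℕ} {c N k : ℕ} (hc : 1 ≤ c) (hfg : ∀ d, f d ≤ g d)
    (hg : ∀ d, N < d → g d = 0) (hlow : ∀ d < c, f d = F d)
    (hsum : ∑ d ∈ Ico 1 (N + 1), f d = k)
    (hstable : ∀ d' d, c ≤ d' → d' < d → f d < g d → f d' = 0)
    (hgreedy : ∀ d, c ≤ d →
      F d = min (g d) (k - ∑ d' ∈ Ico 1 c, F d' - ∑ d' ∈ Ioc d N, F d')) :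
    f = F := by
  suffices key : ∀ t d, N + 1 - d = t → c ≤ d → f d = F d by
    funext d
    rcases lt_or_ge d c with hd | hd
    exacts [hlow d hd, key _ d rfl hd]
  intro t
  induction t using Nat.strong_induction_on with
  | _ t ih =>
  intro d ht hcd
  rcases lt_or_ge N d with hNd | hdN
  · rw [hgreedy d hcd, hg d hNd, Nat.zero_min]
    simpa [hg d hNd] using hfg d
  have hhigh : ∑ d' ∈ Ioc d N, F d' = ∑ d' ∈ Ioc d N, f d' := sum_congr rfl fun d' hd' => by
    rw [mem_Ioc] at hd'
    exact (ih _ (by omega) d' rfl (by omega)).symm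
  have hlow' : ∑ d' ∈ Ico 1 c, F d' = ∑ d' ∈ Ico 1 c, f d' :=
    sum_congr rfl fun d' hd' => (hlow d' (by simp at hd'; omega)).symm
  have hsplit :
      ∑ d' ∈ Ico 1 c, f d' + (∑ d' ∈ Ico c d, f d' + f d) + ∑ d' ∈ Ioc d N, f d' = k := by
    rw [← sum_Ico_succ_top hcd, ← Ico_add_one_add_one_eq_Ioc,
      sum_Ico_consecutive _ hc (by omega), sum_Ico_consecutive _ (by omega) (by omega), hsum]
  have hmiddle : f d < g d → ∑ d' ∈ Ico c d, f d' = 0 := fun hlt =>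
    sum_eq_zero fun d' hd' => hstable d' d (mem_Ico.mp hd').1 (mem_Ico.mp hd').2 hlt
  have := hfg d
  rw [hgreedy d hcd, hhigh, hlow']
  omega

theorem stmt7_general (m n : ℕ) (a : Fin m → ℕ) (b : Fin (n + 1) → ℕ)
    (c : ℕ) (hc : 1 ≤ c) (F : ℕ → ℕ)
    (hgreedy : ∀ d, c ≤ d →
      F d = min ((Finset.univ.filter (fun i : Fin m => a i = d)).card)
        (b 0 - ∑ d' ∈ Finset.Ico 1 c, F d'
             - ∑ d' ∈ Finset.Ioc d (Finset.univ.sup a), F d'))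
    (hpart : ∃ Fc : ℕ → ℕ, (∀ d < c, Fc d = F d) ∧
      ∃ S : Finset (Fin m),
        (∀ d, (S.filter (fun i => a i = d)).card = Fc d) ∧
        S.card = b 0 ∧ (∀ i ∈ S, 1 ≤ a i) ∧
        hasBG m n (fun i => a i - (if i ∈ S then 1 else 0)) (fun j => b j.succ)) :
    ∃ S : Finset (Fin m),
      (∀ d, (S.filter (fun i => a i = d)).card = F d) ∧
      S.card = b 0 ∧ (∀ i ∈ S, 1 ≤ a i) ∧
      hasBG m n (fun i => a i - (if i ∈ S then 1 else 0)) (fun j => b j.succ) := by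
  obtain ⟨Fc, hFc, S₀, hS₀low, hS₀⟩ := hpart
  obtain ⟨S, hS, hstable⟩ :=
    exists_swap_stable a (c ≤ a ·) (IsFeasibleNbhd c F (b 0) a (b ·.succ))
      (fun _ _ _ hS hi hi' hc hlt => hS.swap hi hi' hc hlt)
      ⟨S₀, fun d hd => (hS₀low d).trans (hFc d hd), hS₀⟩
  obtain ⟨hlow, hcard, hpos, hbg⟩ := hS
  have hle_sup : ∀ i, a i ≤ univ.sup a := fun i => le_sup (mem_univ i)
  have hsum : ∑ d ∈ Ico 1 (univ.sup a + 1), #(S.filter (a · = d)) = b 0 := by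
    rw [← hcard]
    exact (card_eq_sum_card_fiberwise fun i hi =>
      mem_Ico.mpr ⟨hpos i hi, Nat.lt_succ_of_le (hle_sup i)⟩).symm
  have hF : (fun d => #(S.filter (a · = d))) = F :=
    eq_of_greedy hc (fun d => card_le_card (filter_subset_filter _ (subset_univ S)))
      (fun d hd => card_eq_zero.mpr <| filter_eq_empty_iff.mpr fun i _ =>
        ((hle_sup i).trans_lt hd).ne)
      hlow hsum (fun _ _ => card_filter_eq_zero_of_swap_stable hstable) hgreedy
  exact ⟨S, fun d => congrFun hF d, hcard, hpos, hbg⟩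

/-- `k`-step greedy lemma: let `(a, b)` be feasible with `b` non-increasing, and let
`F : ℕ → ℕ` give the number of neighbours of node `b 0` chosen in each degree group of `a`
(indexed by the degree value `d`).  Suppose the allocation to degrees `< c` extends to some
complete feasible allocation, and that from degree `c` upward `F` allocates greedily
backward (highest degrees first, `F d = min(group size, remaining)`).  Then the updated
degree sequences after processing node `b 0` with allocation `F` admit a bipartite graph. -/
theorem stmt7 (m n : ℕ) (a : Fin m → ℕ) (b : Fin (n + 1) → ℕ)
    (hb : Antitone b) (hfeas : hasBG m (n + 1) a b)
    (c : ℕ) (hc : 1 ≤ c) (F : ℕ → ℕ)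
    (hgreedy : ∀ d, c ≤ d →
      F d = min ((Finset.univ.filter (fun i : Fin m => a i = d)).card)
        (b 0 - ∑ d' ∈ Finset.Ico 1 c, F d'
             - ∑ d' ∈ Finset.Ioc d (Finset.univ.sup a), F d'))
    (hpart : ∃ Fc : ℕ → ℕ, (∀ d < c, Fc d = F d) ∧
      ∃ S : Finset (Fin m),
        (∀ d, (S.filter (fun i => a i = d)).card = Fc d) ∧
        S.card = b 0 ∧ (∀ i ∈ S, 1 ≤ a i) ∧
        hasBG m n (fun i => a i - (if i ∈ S then 1 else 0)) (fun j => b j.succ)) :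
    ∃ S : Finset (Fin m),
      (∀ d, (S.filter (fun i => a i = d)).card = F d) ∧
      S.card = b 0 ∧ (∀ i ∈ S, 1 ≤ a i) ∧
      hasBG m n (fun i => a i - (if i ∈ S then 1 else 0)) (fun j => b j.succ) :=
  stmt7_general m n a b c hc F hgreedy hpart
end

section
/- Under the hypotheses of the sequential bipartite construction, for the first group (k=1): after connecting b_1 to F(1) vertices of minimal degree α_1, there exists a completion of b_1's connections such that the updated sequences admit a bipartite graph if and only if F(1) lies in the interval [max{b_1 − M, 0}, min{m_1, D_left + D_now + D_right}], where M = Σ_{k≥2} m_k, D_left = Σ_{h<α_1}(z_h − b'_h), D_now = z_{α_1} − b'_{α_1}, and D_right = min{0, min_{r>α_1} Σ_{h=α_1+1}^{r}(z_h − b'_h)}, with z the conjugate of a and b' = (b_2,…,b_n) padded with zeros. -/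
/-- Conjugate vector: `zconj m a h = |{i : a i ≥ h}|`. -/
def zconj (m : ℕ) (a : Fin m → ℕ) (h : ℕ) : ℕ :=
  (Finset.univ.filter (fun i => h ≤ a i)).card

/-- The sequence `b' = (b 1, …, b n)` (the tail of `b`), padded with zeros:
`bpad n b h = b h` for `1 ≤ h ≤ n`, and `0` beyond. -/
def bpad (n : ℕ) (b : Fin (n + 1) → ℕ) (h : ℕ) : ℕ :=
  if h2 : h < n + 1 then b ⟨h, h2⟩ else 0

/-!
By the Gale–Ryser theorem (for non-increasing `b`, `(a, b)` is realisable iff the sums agree and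
`b₀ + ⋯ + b_{k-1} ≤ ∑ᵢ min (aᵢ, k)` for all `k`), a set `S` of `b₀` neighbours of the first
`b`-vertex has a feasible completion iff `b₁ + ⋯ + b_k + #{i ∈ S | aᵢ ≤ k} ≤ ∑ᵢ min (aᵢ, k)` for
all `k`. For `k ≥ α` the left side is at least `F + b₁ + ⋯ + b_k`, which gives the bounds.
Conversely, take any `F` vertices of degree `α` together with the `b₀ - F` largest vertices of
degree `> α`. At a given `k`, either some unchosen vertex has degree `> k`, so that no chosen vertex
of degree `> α` has degree `≤ k` and only the `F` vertices of degree `α` are counted; or every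
vertex of degree `> k` is chosen, and the condition at `k` follows from the Gale–Ryser inequality
of `(a, b)` at `k + 1`. The same dichotomy proves the sufficiency half of Gale–Ryser by induction on
the length of `b`. Finally `∑ᵢ min (aᵢ, r) = z₁ + ⋯ + z_r`, so the conditions for `α ≤ r ≤ n + 1`
read `F ≤ D_left + D_now + D_right`.
-/

open Finset

section PrefixSums

variable {N : ℕ}

def padZero (c : Fin N → ℕ) (h : ℕ) : ℕ :=
  if hh : h < N then c ⟨h, hh⟩ else 0

def prefixSum (c : Fin N → ℕ) (k : ℕ) : ℕ :=
  ∑ h ∈ range k, padZero c h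

lemma padZero_zero (c : Fin (N + 1) → ℕ) : padZero c 0 = c 0 := by
  simp [padZero]

lemma padZero_succ (c : Fin (N + 1) → ℕ) (h : ℕ) : padZero c (h + 1) = padZero (Fin.tail c) h := by
  unfold padZero Fin.tail
  split_ifs <;> first | rfl | omega

lemma padZero_antitone {c : Fin N → ℕ} (hc : Antitone c) : Antitone (padZero c) := by
  intro h₁ h₂ h12
  unfold padZero
  split_ifs <;> first | exact hc (Fin.mk_le_mk.2 h12) | exact Nat.zero_le _ | omega

lemma prefixSum_eq_sum_filter (c : Fin N → ℕ) (k : ℕ) :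
    prefixSum c k = ∑ j : Fin N with j.val < k, c j := by
  have hsupp : ∀ h ∈ range k, padZero c h ≠ 0 → h < N := fun h _ hne => by
    by_contra hN
    exact hne (dif_neg hN)
  calc prefixSum c k = ∑ h ∈ range N with h < k, padZero c h := by
        rw [prefixSum, ← sum_filter_of_ne hsupp]
        congr 1
        ext h
        simp only [mem_filter, mem_range, and_comm]
    _ = ∑ j : Fin N, if j.val < k then padZero c j else 0 :=
        (sum_filter _ _).trans (Fin.sum_univ_eq_sum_range _ _).symm
    _ = ∑ j : Fin N with j.val < k, c j := by
        rw [sum_filter]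
        simp [padZero]

lemma prefixSum_of_le (c : Fin N → ℕ) {k : ℕ} (hk : N ≤ k) : prefixSum c k = ∑ j, c j := by
  rw [prefixSum_eq_sum_filter, filter_true_of_mem fun j _ => j.isLt.trans_le hk]

lemma prefixSum_succ (b : Fin (N + 1) → ℕ) (k : ℕ) :
    prefixSum b (k + 1) = b 0 + prefixSum (Fin.tail b) k := by
  simp only [prefixSum, sum_range_succ', padZero_zero, padZero_succ, add_comm]

lemma prefixSum_tail_le {b : Fin (N + 1) → ℕ} (hb : Antitone b) (k : ℕ) :
    prefixSum (Fin.tail b) k ≤ prefixSum b k :=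
  sum_le_sum fun h _ => padZero_succ b h ▸ padZero_antitone hb h.le_succ

lemma sum_Icc_bpad (b : Fin (N + 1) → ℕ) (r : ℕ) :
    ∑ h ∈ Icc 1 r, bpad N b h = prefixSum (Fin.tail b) r := by
  rw [← Ico_add_one_right_eq_Icc, sum_Ico_eq_sum_range, Nat.add_sub_cancel]
  exact sum_congr rfl fun h _ => by rw [add_comm]; exact padZero_succ b h

end PrefixSums

section Capacity

variable {m : ℕ}

/-- At most `capacity a k` edges join the `a`-side to any `k` vertices of the other side. -/
def capacity (a : Fin m → ℕ) (k : ℕ) : ℕ :=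
  ∑ i, min (a i) k

lemma capacity_succ (a : Fin m → ℕ) (k : ℕ) :
    capacity a (k + 1) = capacity a k + #{i | k + 1 ≤ a i} := by
  rw [capacity, capacity, card_filter, ← sum_add_distrib]
  exact sum_congr rfl fun i _ => by split_ifs <;> omega

lemma capacity_eq_sum_zconj (a : Fin m → ℕ) (k : ℕ) :
    capacity a k = ∑ h ∈ Icc 1 k, zconj m a h := by
  simp only [capacity, zconj, card_filter]
  rw [sum_comm]
  refine sum_congr rfl fun i _ => ?_
  rw [← card_filter, show {h ∈ Icc 1 k | h ≤ a i} = Icc 1 (min (a i) k) by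
    ext h; simp only [mem_filter, mem_Icc, le_min_iff]; omega]
  simp

variable {a : Fin m → ℕ} {S : Finset (Fin m)}

lemma capacity_of_le {k : ℕ} (hk : ∀ i, a i ≤ k) : capacity a k = ∑ i, a i :=
  sum_congr rfl fun i _ => min_eq_left (hk i)

lemma capacity_sub_indicator_add_card (hS : ∀ i ∈ S, 1 ≤ a i) (k : ℕ) :
    capacity (fun i => a i - if i ∈ S then 1 else 0) k + #{i ∈ S | a i ≤ k} = capacity a k := by
  rw [show #{i ∈ S | a i ≤ k} = ∑ i, if i ∈ S ∧ a i ≤ k then 1 else 0 by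
    rw [sum_boole]; congr 1; ext; simp, capacity, capacity, ← sum_add_distrib]
  refine sum_congr rfl fun i _ => ?_
  by_cases hi : i ∈ S
  · have := hS i hi
    simp only [hi, true_and, if_true]
    split_ifs <;> omega
  · simp [hi]

end Capacity

lemma exists_subset_card_eq_forall_sdiff_le {γ β : Type*} [DecidableEq γ] [LinearOrder β]
    (C : Finset γ) (f : γ → β) {c : ℕ} (hc : c ≤ #C) :
    ∃ T ⊆ C, #T = c ∧ ∀ i ∈ T, ∀ j ∈ C \ T, f j ≤ f i := by
  induction c with
  | zero => exact ⟨∅, empty_subset _, card_empty, by simp⟩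
  | succ c ih =>
    obtain ⟨T, hTC, hTcard, hTmax⟩ := ih (Nat.le_of_succ_le hc)
    have hne : (C \ T).Nonempty := by
      rw [← card_pos, card_sdiff_of_subset hTC]
      omega
    obtain ⟨i₀, hi₀, hi₀max⟩ := (C \ T).exists_max_image f hne
    rw [mem_sdiff] at hi₀
    refine ⟨insert i₀ T, insert_subset hi₀.1 hTC, by rw [card_insert_of_notMem hi₀.2, hTcard], ?_⟩
    intro i hi j hj
    rw [mem_sdiff, mem_insert, not_or] at hj
    have hj' : j ∈ C \ T := mem_sdiff.2 ⟨hj.1, hj.2.2⟩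
    rcases mem_insert.1 hi with rfl | hiT
    · exact hi₀max j hj'
    · exact hTmax i hiT j hj'

lemma le_of_mem_of_card_le_card_filter {γ β : Type*} [Fintype γ] [DecidableEq γ] [LinearOrder β]
    {T : Finset γ} {f : γ → β} (hT : ∀ i ∈ T, ∀ j ∉ T, f j ≤ f i) {t : β}
    (hcard : #T ≤ #{i | t ≤ f i}) : ∀ i ∈ T, t ≤ f i := by
  intro i hi
  by_contra! hlt
  have hsub : ({i | t ≤ f i} : Finset γ) ⊆ T.erase i := fun j hj => by
    simp only [mem_filter, mem_univ, true_and] at hj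
    refine mem_erase.2 ⟨fun hji => ?_, by_contra fun hjT => ?_⟩
    · subst hji; exact absurd hj (not_le.2 hlt)
    · exact absurd (hj.trans (hT i hi j hjT)) (not_le.2 hlt)
  have := card_le_card hsub
  rw [card_erase_of_mem hi] at this
  have := card_pos.2 ⟨i, hi⟩
  omega

section Graphs

variable {m n : ℕ} {a : Fin m → ℕ}

lemma hasBG.sum_eq {b : Fin n → ℕ} (h : hasBG m n a b) : ∑ i, a i = ∑ j, b j := by
  obtain ⟨M, hrow, hcol⟩ := h
  simp only [← hrow, ← hcol, card_filter]
  exact sum_comm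

lemma hasBG.apply_le {b : Fin n → ℕ} (h : hasBG m n a b) (i : Fin m) : a i ≤ n := by
  obtain ⟨M, hrow, -⟩ := h
  exact hrow i ▸ (card_filter_le _ _).trans_eq (card_fin n)

lemma hasBG.prefixSum_le_capacity {b : Fin n → ℕ} (h : hasBG m n a b) (k : ℕ) :
    prefixSum b k ≤ capacity a k := by
  obtain ⟨M, hrow, hcol⟩ := h
  rw [prefixSum_eq_sum_filter]
  calc ∑ j : Fin n with j.val < k, b j
      = ∑ i, #{j : Fin n | j.val < k ∧ M i j = true} := by
        simp only [← hcol, card_filter, sum_filter]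
        rw [sum_comm]
        exact sum_congr rfl fun j _ => by split_ifs <;> simp [*]
    _ ≤ capacity a k := by
        refine sum_le_sum fun i _ => le_min ?_ ?_
        · exact hrow i ▸ card_le_card (monotone_filter_right _ fun _ _ hj => hj.2)
        · calc #{j : Fin n | j.val < k ∧ M i j = true}
              ≤ #(range k) := card_le_card_of_injOn Fin.val
                (fun j hj => by simp only [mem_coe, mem_filter, mem_range] at hj ⊢; exact hj.2.1)
                Fin.val_injective.injOn
            _ = k := card_range k

lemma hasBG.of_tail {b : Fin (n + 1) → ℕ} {S : Finset (Fin m)} (hS : ∀ i ∈ S, 1 ≤ a i)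
    (hcard : #S = b 0) (h : hasBG m n (fun i => a i - if i ∈ S then 1 else 0) (Fin.tail b)) :
    hasBG m (n + 1) a b := by
  obtain ⟨M, hrow, hcol⟩ := h
  refine ⟨fun i => Fin.cons (decide (i ∈ S)) (M i), fun i => ?_, Fin.cases ?_ fun j => ?_⟩
  · have hi := hrow i
    rw [card_filter] at hi ⊢
    rw [Fin.sum_univ_succ]
    simp only [Fin.cons_zero, Fin.cons_succ, decide_eq_true_eq, hi]
    split_ifs with hiS
    · have := hS i hiS; omega
    · omega
  · simpa using hcard
  · simpa [Fin.tail] using hcol j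

lemma prefixSum_tail_add_card_filter_le {b : Fin (n + 1) → ℕ} {S : Finset (Fin m)} {k : ℕ}
    (hdom : prefixSum b (k + 1) ≤ capacity a (k + 1)) (hcard : #S = b 0)
    (hout : ∀ i ∉ S, a i ≤ k) :
    prefixSum (Fin.tail b) k + #{i ∈ S | a i ≤ k} ≤ capacity a k := by
  have hbig : ({i | k + 1 ≤ a i} : Finset (Fin m)) ⊆ {i ∈ S | k < a i} := fun i hi => by
    simp only [mem_filter, mem_univ, true_and] at hi ⊢
    exact ⟨by_contra fun hiS => by have := hout i hiS; omega, hi⟩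
  have := card_le_card hbig
  have := card_filter_add_card_filter_not (s := S) (p := fun i => a i ≤ k)
  simp only [not_le] at this
  rw [prefixSum_succ, capacity_succ] at hdom
  omega

lemma sum_sub_indicator_eq_sum_tail {b : Fin (n + 1) → ℕ} {S : Finset (Fin m)}
    (hS : ∀ i ∈ S, 1 ≤ a i) (hcard : #S = b 0) (hsum : ∑ i, a i = ∑ j, b j) :
    ∑ i, (a i - if i ∈ S then 1 else 0) = ∑ j, Fin.tail b j := by
  have hind : ∑ i, (a i - if i ∈ S then 1 else 0) + #S = ∑ i, a i := by
    rw [show #S = ∑ i, if i ∈ S then 1 else 0 by simp, ← sum_add_distrib]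
    refine sum_congr rfl fun i _ => ?_
    split_ifs with hi
    · have := hS i hi; omega
    · rfl
  rw [hsum, Fin.sum_univ_succ] at hind
  simp only [Fin.tail]
  omega

theorem hasBG_of_prefixSum_le_capacity : ∀ {n : ℕ} {a : Fin m → ℕ} {b : Fin n → ℕ},
    Antitone b → ∑ i, a i = ∑ j, b j → (∀ k, prefixSum b k ≤ capacity a k) → hasBG m n a b
  | 0, a, b, _, hsum, _ => by
    have ha : ∀ i, a i = 0 := fun i => sum_eq_zero_iff.1 (by simpa using hsum) i (mem_univ i)
    exact ⟨fun _ j => j.elim0, fun i => by simp [ha i], fun j => j.elim0⟩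
  | n + 1, a, b, hb, hsum, hdom => by
    have hb₀ : b 0 ≤ #{i | 1 ≤ a i} := by
      have := hdom 1
      rw [prefixSum_succ, capacity_succ] at this
      simpa [prefixSum, capacity] using this
    obtain ⟨S, -, hcard, hmax⟩ := exists_subset_card_eq_forall_sdiff_le univ a
      (hb₀.trans (card_le_univ _))
    replace hmax : ∀ i ∈ S, ∀ j ∉ S, a j ≤ a i := fun i hi j hj => hmax i hi j (by simp [hj])
    have hS : ∀ i ∈ S, 1 ≤ a i := le_of_mem_of_card_le_card_filter hmax (hcard ▸ hb₀)
    refine hasBG.of_tail hS hcard (hasBG_of_prefixSum_le_capacity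
      (fun i j hij => hb (Fin.succ_le_succ_iff.2 hij)) ?_ fun k => ?_)
    · exact sum_sub_indicator_eq_sum_tail hS hcard hsum
    · rw [← Nat.add_le_add_iff_right (n := #{i ∈ S | a i ≤ k}), capacity_sub_indicator_add_card hS]
      by_cases hout : ∀ i ∉ S, a i ≤ k
      · exact prefixSum_tail_add_card_filter_le (hdom (k + 1)) hcard hout
      · obtain ⟨j, hjS, hjk⟩ : ∃ j ∉ S, k < a j := by simpa using hout
        have hempty : {i ∈ S | a i ≤ k} = ∅ :=
          filter_eq_empty_iff.2 fun i hi hik => by have := hmax i hi j hjS; omega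
        rw [hempty, card_empty, add_zero]
        exact (prefixSum_tail_le hb k).trans (hdom k)

end Graphs

section Completion

variable {m n : ℕ} {a : Fin m → ℕ} {b : Fin (n + 1) → ℕ}

lemma hasBG_tail_iff (hb : Antitone b) (hsum : ∑ i, a i = ∑ j, b j) {S : Finset (Fin m)}
    (hS : ∀ i ∈ S, 1 ≤ a i) (hcard : #S = b 0) :
    hasBG m n (fun i => a i - if i ∈ S then 1 else 0) (Fin.tail b) ↔
      ∀ k, prefixSum (Fin.tail b) k + #{i ∈ S | a i ≤ k} ≤ capacity a k := by
  simp only [← capacity_sub_indicator_add_card hS, Nat.add_le_add_iff_right]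
  exact ⟨fun h => h.prefixSum_le_capacity, hasBG_of_prefixSum_le_capacity
    (fun i j hij => hb (Fin.succ_le_succ_iff.2 hij)) (sum_sub_indicator_eq_sum_tail hS hcard hsum)⟩

lemma hasBG.capacity_eq_add_prefixSum_tail (hfeas : hasBG m (n + 1) a b) :
    capacity a (n + 1) = b 0 + prefixSum (Fin.tail b) (n + 1) := by
  rw [prefixSum_of_le _ n.le_succ, capacity_of_le hfeas.apply_le, hfeas.sum_eq, Fin.sum_univ_succ]
  rfl

variable {α F : ℕ}

lemma completion_bounds (hα : ∀ i, α ≤ a i) {S : Finset (Fin m)} (hcard : #S = b 0)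
    (hF : #{i ∈ S | a i = α} = F)
    (hdom : ∀ k, prefixSum (Fin.tail b) k + #{i ∈ S | a i ≤ k} ≤ capacity a k) :
    b 0 ≤ F + #{i | α < a i} ∧ F ≤ #{i | a i = α} ∧
      ∀ r, α ≤ r → F + prefixSum (Fin.tail b) r ≤ capacity a r := by
  refine ⟨?_, hF ▸ card_le_card (filter_subset_filter _ (subset_univ S)), fun r hr => ?_⟩
  · have hsplit := card_filter_add_card_filter_not (s := S) (p := fun i => a i = α)
    have hC : #{i ∈ S | ¬a i = α} ≤ #{i | α < a i} := card_le_card fun i hi => by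
      simp only [mem_filter, mem_univ, true_and] at hi ⊢
      exact lt_of_le_of_ne (hα i) (Ne.symm hi.2)
    omega
  · refine le_trans (Nat.add_le_add_right ?_ _) ((add_comm _ _).trans_le (hdom r))
    exact hF ▸ card_le_card (monotone_filter_right S fun i _ hi => hi.trans_le hr)

lemma exists_completion (hb : Antitone b) (hfeas : hasBG m (n + 1) a b) (hα : ∀ i, α ≤ a i)
    (hlow : b 0 ≤ F + #{i | α < a i}) (hA : F ≤ #{i | a i = α})
    (hr : ∀ r ∈ Icc α (n + 1), F + prefixSum (Fin.tail b) r ≤ capacity a r) :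
    ∃ S : Finset (Fin m), #S = b 0 ∧ #{i ∈ S | a i = α} = F ∧
      ∀ k, prefixSum (Fin.tail b) k + #{i ∈ S | a i ≤ k} ≤ capacity a k := by
  have hFb : F ≤ b 0 := by
    by_cases hαn : α ≤ n + 1
    · have := hr (n + 1) (mem_Icc.2 ⟨hαn, le_rfl⟩)
      rw [hfeas.capacity_eq_add_prefixSum_tail] at this
      omega
    · rw [filter_false_of_mem fun i _ (h : a i = α) => hαn (h ▸ hfeas.apply_le i), card_empty] at hA
      omega
  obtain ⟨SA, hSA, hSAcard⟩ := exists_subset_card_eq hA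
  obtain ⟨SC, hSC, hSCcard, hSCmax⟩ := exists_subset_card_eq_forall_sdiff_le
    {i | α < a i} a (c := b 0 - F) (by omega)
  have hSA' : ∀ i ∈ SA, a i = α := fun i hi => by simpa using hSA hi
  have hSC' : ∀ i ∈ SC, α < a i := fun i hi => by simpa using hSC hi
  have hdisj : Disjoint SA SC := disjoint_left.2 fun i hA hC => by
    have := hSA' i hA; have := hSC' i hC; omega
  have hcard : #(SA ∪ SC) = b 0 := by rw [card_union_of_disjoint hdisj]; omega
  have hfilterA : {i ∈ SA ∪ SC | a i = α} = SA := by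
    rw [filter_union, filter_true_of_mem hSA', filter_false_of_mem fun i hi => (hSC' i hi).ne',
      union_empty]
  refine ⟨SA ∪ SC, hcard, by rw [hfilterA, hSAcard], fun k => ?_⟩
  by_cases hout : ∀ i ∉ SA ∪ SC, a i ≤ k
  · exact prefixSum_tail_add_card_filter_le (hfeas.prefixSum_le_capacity (k + 1)) hcard hout
  simp only [not_forall, not_le] at hout
  obtain ⟨j, hjS, hjk⟩ := hout
  rcases lt_or_ge k α with hkα | hαk
  · rw [filter_false_of_mem fun i _ hik => by have := hα i; omega, card_empty, add_zero]
    exact (prefixSum_tail_le hb k).trans (hfeas.prefixSum_le_capacity k)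
  · have hjSC : j ∈ ({i | α < a i} : Finset (Fin m)) \ SC := by
      simp only [mem_sdiff, mem_filter, mem_univ, true_and]
      exact ⟨by omega, fun h => hjS (mem_union_right _ h)⟩
    have hsub : {i ∈ SA ∪ SC | a i ≤ k} ⊆ SA := fun i hi => by
      simp only [mem_filter, mem_union] at hi
      rcases hi with ⟨hi | hi, hik⟩
      · exact hi
      · have := hSCmax i hi j hjSC; omega
    have := card_le_card hsub
    have := hr k (mem_Icc.2 ⟨hαk, by have := hfeas.apply_le j; omega⟩)
    omega

end Completion

lemma le_add_min_csInf_zero_iff {s : Finset ℤ} {x c : ℤ} :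
    x ≤ c + min (sInf (s : Set ℤ)) 0 ↔ x ≤ c ∧ ∀ y ∈ s, x ≤ c + y := by
  rcases s.eq_empty_or_nonempty with rfl | hs
  · simp [Int.csInf_empty]
  · rw [← sub_le_iff_le_add', le_min_iff, le_csInf_iff s.bddBelow (coe_nonempty.2 hs), and_comm]
    simp only [mem_coe, sub_le_iff_le_add', add_zero]

lemma forall_le_sum_Icc_iff (f : ℕ → ℤ) (x : ℤ) {α N : ℕ} (hα : 1 ≤ α) (hαN : α ≤ N) :
    (∀ r ∈ Icc α N, x ≤ ∑ h ∈ Icc 1 r, f h) ↔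
      x ≤ ∑ h ∈ Icc 1 (α - 1), f h + f α +
        min (sInf {s | ∃ r ∈ Icc (α + 1) N, s = ∑ h ∈ Icc (α + 1) r, f h}) 0 := by
  have hset : {s | ∃ r ∈ Icc (α + 1) N, s = ∑ h ∈ Icc (α + 1) r, f h}
      = ↑((Icc (α + 1) N).image fun r => ∑ h ∈ Icc (α + 1) r, f h) := by
    ext
    simp [eq_comm]
  have hhead : ∑ h ∈ Icc 1 (α - 1), f h + f α = ∑ h ∈ Icc 1 α, f h := by
    rw [← insert_Icc_sub_one_right_eq_Icc hα, sum_insert (by simp; omega), add_comm]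
  have hsplit : ∀ r, α ≤ r → ∑ h ∈ Icc 1 r, f h = ∑ h ∈ Icc 1 α, f h + ∑ h ∈ Icc (α + 1) r, f h :=
    fun r hr => by
      simp only [← Ico_add_one_right_eq_Icc]
      exact (sum_Ico_consecutive f (by omega) (by omega)).symm
  rw [hset, hhead, le_add_min_csInf_zero_iff, forall_mem_image, ← insert_Icc_add_one_left_eq_Icc hαN,
    forall_mem_insert]
  exact and_congr_right' (forall₂_congr fun r hr => by rw [hsplit r (by simp at hr; omega)])

theorem stmt8_general (m n : ℕ) (a : Fin m → ℕ) (b : Fin (n + 1) → ℕ)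
    (hb : Antitone b) (ha : ∀ i, 1 ≤ a i)
    (hfeas : hasBG m (n + 1) a b)
    (α : ℕ) (hα₁ : ∃ i, a i = α) (hα₂ : ∀ i, α ≤ a i)
    (F1 : ℕ) :
    (∃ S : Finset (Fin m), S.card = b 0 ∧
        (S.filter (fun i => a i = α)).card = F1 ∧
        hasBG m n (fun i => a i - (if i ∈ S then 1 else 0)) (fun j => b j.succ))
    ↔ (b 0 - (Finset.univ.filter (fun i : Fin m => α < a i)).card ≤ F1 ∧
        F1 ≤ (Finset.univ.filter (fun i : Fin m => a i = α)).card ∧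
        (F1 : ℤ) ≤
          (∑ h ∈ Finset.Icc 1 (α - 1), ((zconj m a h : ℤ) - (bpad n b h : ℤ)))
          + ((zconj m a α : ℤ) - (bpad n b α : ℤ))
          + min (sInf {s : ℤ | ∃ r ∈ Finset.Icc (α + 1) (n + 1),
              s = ∑ h ∈ Finset.Icc (α + 1) r,
                    ((zconj m a h : ℤ) - (bpad n b h : ℤ))}) 0) := by
  obtain ⟨hα₀, hαn⟩ : 1 ≤ α ∧ α ≤ n + 1 := by
    obtain ⟨i, rfl⟩ := hα₁
    exact ⟨ha i, hfeas.apply_le i⟩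
  have hcond (r : ℕ) : F1 + prefixSum (Fin.tail b) r ≤ capacity a r ↔
      (F1 : ℤ) ≤ ∑ h ∈ Icc 1 r, ((zconj m a h : ℤ) - (bpad n b h : ℤ)) := by
    rw [sum_sub_distrib, ← Nat.cast_sum, ← Nat.cast_sum, capacity_eq_sum_zconj, sum_Icc_bpad]
    omega
  rw [← forall_le_sum_Icc_iff _ _ hα₀ hαn]
  simp only [← hcond]
  refine (exists_congr fun S => and_congr_right fun hS => and_congr_right fun _ =>
    hasBG_tail_iff hb hfeas.sum_eq (fun i _ => ha i) hS).trans ⟨?_, ?_⟩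
  · rintro ⟨S, hS, hF, hdom⟩
    obtain ⟨h₁, h₂, h₃⟩ := completion_bounds hα₂ hS hF hdom
    exact ⟨by omega, h₂, fun r hr => h₃ r (mem_Icc.1 hr).1⟩
  · rintro ⟨h₁, h₂, h₃⟩
    exact exists_completion hb hfeas hα₂ (by omega) h₂ h₃

/-- Theorem 1 (base case, `k = 1`): let `(a, b)` be a feasible pair with `b` non-increasing,
all degrees positive, and let `α` be the minimal degree on the `a`-side.  Then node `b 0`
can connect to exactly `F1` vertices of degree `α` with a feasible completion of its
remaining connections if and only if
`max{b 0 − M, 0} ≤ F1 ≤ min{m₁, D_left + D_now + D_right}`. -/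
theorem stmt8 (m n : ℕ) (a : Fin m → ℕ) (b : Fin (n + 1) → ℕ)
    (hb : Antitone b) (ha : ∀ i, 1 ≤ a i) (hbpos : ∀ j, 1 ≤ b j)
    (hfeas : hasBG m (n + 1) a b)
    (α : ℕ) (hα₁ : ∃ i, a i = α) (hα₂ : ∀ i, α ≤ a i)
    (F1 : ℕ) :
    (∃ S : Finset (Fin m), S.card = b 0 ∧
        (S.filter (fun i => a i = α)).card = F1 ∧
        hasBG m n (fun i => a i - (if i ∈ S then 1 else 0)) (fun j => b j.succ))
    ↔ (b 0 - (Finset.univ.filter (fun i : Fin m => α < a i)).card ≤ F1 ∧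
        F1 ≤ (Finset.univ.filter (fun i : Fin m => a i = α)).card ∧
        (F1 : ℤ) ≤
          (∑ h ∈ Finset.Icc 1 (α - 1), ((zconj m a h : ℤ) - (bpad n b h : ℤ)))
          + ((zconj m a α : ℤ) - (bpad n b α : ℤ))
          + min (sInf {s : ℤ | ∃ r ∈ Finset.Icc (α + 1) (n + 1),
              s = ∑ h ∈ Finset.Icc (α + 1) r,
                    ((zconj m a h : ℤ) - (bpad n b h : ℤ))}) 0) :=
  stmt8_general m n a b hb ha hfeas α hα₁ hα₂ F1
end

section
/- In the setting of the interval theorem, the sum D_left + D_now + D_right is at most the remaining degree b_1^{(k)} of the node being processed; in particular for k=1, Σ_{h=1}^{α_1−1}(z_h−b'_h) + (z_{α_1}−b'_{α_1}) + min{0, min_{r>α_1} Σ_{h=α_1+1}^{r}(z_h−b'_h)} ≤ b_1. -/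
/-!
Write `S h = z_h - b'_h`. Since the conjugate `z` of `a` has the same sum as `a`, the total of
`S` over `1 ≤ h ≤ K` is `Σ a - (Σ b - b 0) = b 0` for every `K ≥ n + 1`. `D_left + D_now` is
the partial sum of `S` up to `α`, and `D_right` is at most the remaining sum up to `n + 1`: that
sum is one of those the minimum ranges over, or it is the empty sum `0`.
-/

open Finset

theorem sum_Icc_one_zconj {m K : ℕ} (a : Fin m → ℕ) (hK : ∀ i, a i ≤ K) :
    ∑ h ∈ Icc 1 K, zconj m a h = ∑ i, a i := by
  simp only [zconj, card_filter]
  rw [sum_comm]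
  refine sum_congr rfl fun i _ => ?_
  rw [← card_filter, show (Icc 1 K).filter (· ≤ a i) = Icc 1 (a i) by
    ext h; simp only [mem_filter, mem_Icc]; have := hK i; omega]
  simp

theorem bpad_of_le {n h : ℕ} (b : Fin (n + 1) → ℕ) (hh : n + 1 ≤ h) : bpad n b h = 0 :=
  dif_neg (by omega)

theorem head_add_sum_Icc_one_bpad {n K : ℕ} (b : Fin (n + 1) → ℕ) (hK : n ≤ K) :
    b 0 + ∑ h ∈ Icc 1 K, bpad n b h = ∑ j, b j := by
  calc b 0 + ∑ h ∈ Icc 1 K, bpad n b h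
      = ∑ h ∈ Icc 0 K, bpad n b h := by
        rw [← add_sum_Ioc_eq_sum_Icc (Nat.zero_le K), ← Icc_add_one_left_eq_Ioc]; rfl
    _ = ∑ h ∈ range (n + 1), bpad n b h := by
        refine (sum_subset (fun h hh => by simp only [mem_range, mem_Icc] at hh ⊢; omega) fun h _ hh => ?_).symm
        exact bpad_of_le b (by simpa using hh)
    _ = ∑ j, b j := by
        rw [← Fin.sum_univ_eq_sum_range]
        simp [bpad, Fin.is_le]

theorem sum_Icc_one_zconj_sub_bpad {m n K : ℕ} (a : Fin m → ℕ) (b : Fin (n + 1) → ℕ)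
    (hsum : ∑ i, a i = ∑ j, b j) (ha : ∀ i, a i ≤ K) (hK : n ≤ K) :
    ∑ h ∈ Icc 1 K, ((zconj m a h : ℤ) - bpad n b h) = b 0 := by
  have hz := sum_Icc_one_zconj a ha
  have hb := head_add_sum_Icc_one_bpad b hK
  rw [sum_sub_distrib]
  zify at hz hb hsum
  linarith

theorem sum_Icc_one_add_sum_Icc_succ {M : Type*} [AddCommMonoid M] (f : ℕ → M) (α N : ℕ) :
    ∑ h ∈ Icc 1 α, f h + ∑ h ∈ Icc (α + 1) N, f h = ∑ h ∈ Icc 1 (max α N), f h := by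
  simp only [Icc_add_one_left_eq_Ioc, show ∀ k, Icc 1 k = Ioc 0 k from Icc_add_one_left_eq_Ioc 0]
  rcases le_total α N with hαN | hNα
  · rw [max_eq_right hαN, sum_Ioc_consecutive f (Nat.zero_le α) hαN]
  · rw [max_eq_left hNα, Ioc_eq_empty_of_le hNα, sum_empty, add_zero]

theorem min_sInf_partial_sums_le_sum {a N : ℕ} (f : ℕ → ℤ) :
    min (sInf {s : ℤ | ∃ r ∈ Icc a N, s = ∑ h ∈ Icc a r, f h}) 0 ≤ ∑ h ∈ Icc a N, f h := by
  rcases le_or_gt a N with haN | hNa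
  · have hfin : {s : ℤ | ∃ r ∈ Icc a N, s = ∑ h ∈ Icc a r, f h}.Finite := by
      refine ((Set.finite_Icc a N).image fun r => ∑ h ∈ Icc a r, f h).subset ?_
      rintro s ⟨r, hr, rfl⟩
      exact ⟨r, by simpa using hr, rfl⟩
    exact (min_le_left _ _).trans (csInf_le hfin.bddBelow ⟨N, by simp [haN], rfl⟩)
  · rw [Icc_eq_empty_of_lt hNa, sum_empty]
    exact min_le_right _ _

theorem stmt9_general (m n : ℕ) (a : Fin m → ℕ) (b : Fin (n + 1) → ℕ)
    (hsum : ∑ i, a i = ∑ j, b j) (hmax : ∀ i, a i ≤ n + 1)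
    (α : ℕ) (hα : 1 ≤ α) :
    (∑ h ∈ Finset.Icc 1 (α - 1), ((zconj m a h : ℤ) - (bpad n b h : ℤ)))
      + ((zconj m a α : ℤ) - (bpad n b α : ℤ))
      + min (sInf {s : ℤ | ∃ r ∈ Finset.Icc (α + 1) (n + 1),
          s = ∑ h ∈ Finset.Icc (α + 1) r, ((zconj m a h : ℤ) - (bpad n b h : ℤ))}) 0
    ≤ (b 0 : ℤ) := by
  set S : ℕ → ℤ := fun h => (zconj m a h : ℤ) - (bpad n b h : ℤ)
  have hleft_now : ∑ h ∈ Icc 1 (α - 1), S h + S α = ∑ h ∈ Icc 1 α, S h := by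
    obtain ⟨β, rfl⟩ : ∃ β, α = β + 1 := ⟨α - 1, by omega⟩
    rw [sum_Icc_succ_top (by omega), Nat.add_sub_cancel]
  have hright := min_sInf_partial_sums_le_sum (a := α + 1) (N := n + 1) S
  have hsplit := sum_Icc_one_add_sum_Icc_succ S α (n + 1)
  have htotal : ∑ h ∈ Icc 1 (max α (n + 1)), S h = b 0 :=
    sum_Icc_one_zconj_sub_bpad a b hsum (fun i => (hmax i).trans (le_max_right _ _))
      (by omega)
  linarith

/-- `D_left + D_now + D_right ≤ b 0`: with `z` the conjugate of `a`, `b'` the tail of `b`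
padded with zeros, `Σa = Σb` and all degrees at most the number of `b`-nodes,
`Σ_{h<α}(z_h−b'_h) + (z_α−b'_α) + min{0, min_{r>α} Σ_{h=α+1}^r (z_h−b'_h)} ≤ b 0`. -/
theorem stmt9 (m n : ℕ) (a : Fin m → ℕ) (b : Fin (n + 1) → ℕ)
    (hb : Antitone b) (hsum : ∑ i, a i = ∑ j, b j) (hmax : ∀ i, a i ≤ n + 1)
    (α : ℕ) (hα : 1 ≤ α) :
    (∑ h ∈ Finset.Icc 1 (α - 1), ((zconj m a h : ℤ) - (bpad n b h : ℤ)))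
      + ((zconj m a α : ℤ) - (bpad n b α : ℤ))
      + min (sInf {s : ℤ | ∃ r ∈ Finset.Icc (α + 1) (n + 1),
          s = ∑ h ∈ Finset.Icc (α + 1) r, ((zconj m a h : ℤ) - (bpad n b h : ℤ))}) 0
    ≤ (b 0 : ℤ) :=
  stmt9_general m n a b hsum hmax α hα
end

section
/- Suppose (a,b) with b non-increasing admits a bipartite graph and b_1 ≥ 1. Then the interval [max{b_1 − M^{(1)}, 0}, min{m_1, D_left^{(1)} + D_now^{(1)} + D_right^{(1)}}] for F(1) is nonempty; i.e., max{b_1 − Σ_{k≥2} m_k, 0} ≤ min{m_1, D_left^{(1)} + D_now^{(1)} + D_right^{(1)}}. -/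
/-!
Double counting the edges of a realization bounds the degree sum of any `k` columns by
`∑ᵢ min(aᵢ, k) = z₁ + ⋯ + z_k`. For the columns `1, …, r` this makes every partial sum
`∑_{h ≤ r} (z_h − b'_h)` nonnegative; for the columns `0, …, r` with `r ≥ α` the extra
term `z_{r+1}` only counts rows of degree `> α`, so the same partial sum is at least
`b₁ − M⁽¹⁾` (the paper's `b₁` is `b 0`). The upper end `D_left + D_now + D_right` of the
interval is such a partial sum for some `r ≥ α`, and `b₁ ≤ m = m₁ + M⁽¹⁾` takes care of
the bound `m₁`.
-/

open Finset

lemma sum_Icc_zconj (m : ℕ) (a : Fin m → ℕ) (t : ℕ) :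
    ∑ h ∈ Icc 1 t, zconj m a h = ∑ i, min (a i) t := by
  simp only [zconj, card_filter]
  rw [sum_comm]
  refine sum_congr rfl fun i _ => ?_
  rw [← card_filter, show {h ∈ Icc 1 t | h ≤ a i} = Icc 1 (min (a i) t) by
    ext h; simp only [mem_filter, mem_Icc]; omega]
  simp

lemma zconj_le_card_lt {m : ℕ} (a : Fin m → ℕ) {α r : ℕ} (hr : α ≤ r) :
    zconj m a (r + 1) ≤ #{i | α < a i} :=
  card_le_card <| monotone_filter_right _ fun i _ (h : r + 1 ≤ a i) => by omega

lemma sum_bpad (n : ℕ) (b : Fin (n + 1) → ℕ) (S : Finset ℕ) :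
    ∑ h ∈ S, bpad n b h = ∑ j with j.val ∈ S, b j := by
  calc ∑ h ∈ S, bpad n b h = ∑ h ∈ S with h < n + 1, bpad n b h :=
        (sum_filter_of_ne fun h _ hne => by by_contra hh; exact hne (dif_neg hh)).symm
    _ = ∑ j with j.val ∈ S, b j := by
        symm
        refine sum_nbij Fin.val (fun j hj => ?_) (fun j _ k _ => Fin.ext) (fun h hh => ?_)
          (fun j _ => by simp [bpad, j.isLt])
        · exact mem_filter.2 ⟨(mem_filter.1 hj).2, j.isLt⟩
        · simp only [coe_filter, mem_univ, true_and, Set.mem_ofPred_eq] at hh ⊢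
          exact ⟨⟨h, hh.2⟩, hh.1, rfl⟩

lemma card_filter_val_mem_le (n : ℕ) (S : Finset ℕ) :
    #{j : Fin (n + 1) | j.val ∈ S} ≤ #S :=
  card_le_card_of_injOn Fin.val (fun j hj => by simpa using hj) (fun j _ k _ => Fin.ext)

namespace hasBG

variable {m n : ℕ} {a : Fin m → ℕ} {b : Fin n → ℕ}

lemma col_le_card_rows (hab : hasBG m n a b) (j : Fin n) : b j ≤ m := by
  obtain ⟨M, -, hcol⟩ := hab
  simpa [← hcol j] using card_le_univ {i | M i j = true}

lemma sum_le_sum_min_card (hab : hasBG m n a b) (J : Finset (Fin n)) :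
    ∑ j ∈ J, b j ≤ ∑ i, min (a i) #J := by
  obtain ⟨M, hrow, hcol⟩ := hab
  calc ∑ j ∈ J, b j = ∑ j ∈ J, #(univ.bipartiteBelow (fun i j => M i j = true) j) := by
        simp [bipartiteBelow, hcol]
    _ = ∑ i, #(J.bipartiteAbove (fun i j => M i j = true) i) :=
        (sum_card_bipartiteAbove_eq_sum_card_bipartiteBelow _).symm
    _ ≤ ∑ i, min (a i) #J := by
        refine sum_le_sum fun i _ => le_min ?_ (card_filter_le _ _)
        exact hrow i ▸ card_le_card (monotone_filter_left _ (subset_univ J))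

lemma sum_bpad_le {b : Fin (n + 1) → ℕ} (hab : hasBG m (n + 1) a b) (S : Finset ℕ) :
    ∑ h ∈ S, bpad n b h ≤ ∑ i, min (a i) #S :=
  sum_bpad n b S ▸ (hab.sum_le_sum_min_card _).trans
    (sum_le_sum fun _ _ => min_le_min_left _ (card_filter_val_mem_le n S))

lemma sum_bpad_le_sum_zconj {b : Fin (n + 1) → ℕ} (hab : hasBG m (n + 1) a b) (r : ℕ) :
    ∑ h ∈ Icc 1 r, bpad n b h ≤ ∑ h ∈ Icc 1 r, zconj m a h := by
  simpa [sum_Icc_zconj] using hab.sum_bpad_le (Icc 1 r)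

lemma add_sum_bpad_le {b : Fin (n + 1) → ℕ} (hab : hasBG m (n + 1) a b) {α r : ℕ}
    (hr : α ≤ r) :
    b 0 + ∑ h ∈ Icc 1 r, bpad n b h ≤ ∑ h ∈ Icc 1 r, zconj m a h + #{i | α < a i} := by
  have h := hab.sum_bpad_le (Icc 0 r)
  rw [Nat.card_Icc, Nat.sub_zero, ← sum_Icc_zconj, sum_Icc_succ_top (by omega),
    ← insert_Icc_add_one_left_eq_Icc r.zero_le, sum_insert (by simp)] at h
  exact h.trans (add_le_add_right (zconj_le_card_lt a hr) _)

end hasBG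

lemma le_min_sInf_zero {ι : Type*} (R : Finset ι) (g : ι → ℤ) {c : ℤ}
    (hR : ∀ r ∈ R, c ≤ g r) (h0 : c ≤ 0) : c ≤ min (sInf {s | ∃ r ∈ R, s = g r}) 0 := by
  refine le_min ?_ h0
  rcases Set.eq_empty_or_nonempty {s | ∃ r ∈ R, s = g r} with hemp | hne
  · rwa [hemp, Int.csInf_empty]
  · exact le_csInf hne fun s ⟨r, hr, hs⟩ => hs ▸ hR r hr

lemma le_sum_add_min_sInf (f : ℕ → ℤ) {α : ℕ} (hα : 1 ≤ α) (N : ℕ) {c : ℤ}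
    (hc : ∀ r, α ≤ r → c ≤ ∑ h ∈ Icc 1 r, f h) :
    c ≤ ∑ h ∈ Icc 1 (α - 1), f h + f α
      + min (sInf {s | ∃ r ∈ Icc (α + 1) N, s = ∑ h ∈ Icc (α + 1) r, f h}) 0 := by
  obtain ⟨k, rfl⟩ := Nat.exists_eq_add_of_le' hα
  rw [Nat.add_sub_cancel, ← sum_Icc_succ_top (by omega)]
  have hsplit : ∀ r, k + 1 ≤ r →
      ∑ h ∈ Icc 1 r, f h = ∑ h ∈ Icc 1 (k + 1), f h + ∑ h ∈ Icc (k + 1 + 1) r, f h := by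
    intro r hr
    simp only [Icc_add_one_left_eq_Ioc]
    exact (sum_Ioc_consecutive f (by omega) hr).symm
  rw [← sub_le_iff_le_add']
  refine le_min_sInf_zero _ _ (fun r hr => ?_) ?_
  · have hr' : k + 1 ≤ r := by have := (mem_Icc.1 hr).1; omega
    have := hc r hr'
    rw [hsplit r hr'] at this
    linarith
  · simpa using hc _ le_rfl

theorem stmt19_general (m n : ℕ) (a : Fin m → ℕ) (b : Fin (n + 1) → ℕ)
    (ha : ∀ i, 1 ≤ a i)
    (hfeas : hasBG m (n + 1) a b)
    (α : ℕ) (hα₁ : ∃ i, a i = α) (hα₂ : ∀ i, α ≤ a i) :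
    max ((b 0 : ℤ) - ((Finset.univ.filter (fun i : Fin m => α < a i)).card : ℤ)) 0
      ≤ min ((Finset.univ.filter (fun i : Fin m => a i = α)).card : ℤ)
        ((∑ h ∈ Finset.Icc 1 (α - 1), ((zconj m a h : ℤ) - (bpad n b h : ℤ)))
          + ((zconj m a α : ℤ) - (bpad n b α : ℤ))
          + min (sInf {s : ℤ | ∃ r ∈ Finset.Icc (α + 1) (n + 1),
              s = ∑ h ∈ Finset.Icc (α + 1) r,
                    ((zconj m a h : ℤ) - (bpad n b h : ℤ))}) 0) := by
  have hα : 1 ≤ α := hα₁.elim fun i hi => hi ▸ ha i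
  have hsplit : #{i | a i = α} + #{i | α < a i} = m := by
    calc #{i | a i = α} + #{i | α < a i} = #{i | a i = α} + #{i | ¬a i = α} := by
          simp_rw [(hα₂ _).lt_iff_ne']
      _ = m := by rw [card_filter_add_card_filter_not, card_univ, Fintype.card_fin]
  have hb0 := hfeas.col_le_card_rows 0
  have hsum_nonneg : ∀ r, α ≤ r →
      (0 : ℤ) ≤ ∑ h ∈ Icc 1 r, ((zconj m a h : ℤ) - bpad n b h) := by
    intro r _
    rw [sum_sub_distrib, sub_nonneg]
    exact_mod_cast hfeas.sum_bpad_le_sum_zconj r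
  have hsum_ge : ∀ r, α ≤ r →
      (b 0 : ℤ) - #{i | α < a i} ≤ ∑ h ∈ Icc 1 r, ((zconj m a h : ℤ) - bpad n b h) := by
    intro r hr
    rw [sum_sub_distrib, sub_le_sub_iff]
    exact_mod_cast hfeas.add_sum_bpad_le hr
  refine max_le (le_min ?_ (le_sum_add_min_sInf _ hα _ hsum_ge))
    (le_min (by positivity) (le_sum_add_min_sInf _ hα _ hsum_nonneg))
  omega

/-- Nonemptiness of the feasibility interval for `F(1)`: if `(a, b)` admits a bipartite
graph, `b` is non-increasing with positive entries, `a` has positive entries and minimal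
degree `α`, then `max{b 0 − M⁽¹⁾, 0} ≤ min{m₁, D_left⁽¹⁾ + D_now⁽¹⁾ + D_right⁽¹⁾}`. -/
theorem stmt19 (m n : ℕ) (a : Fin m → ℕ) (b : Fin (n + 1) → ℕ)
    (hb : Antitone b) (ha : ∀ i, 1 ≤ a i) (hbpos : ∀ j, 1 ≤ b j)
    (hfeas : hasBG m (n + 1) a b)
    (α : ℕ) (hα₁ : ∃ i, a i = α) (hα₂ : ∀ i, α ≤ a i) :
    max ((b 0 : ℤ) - ((Finset.univ.filter (fun i : Fin m => α < a i)).card : ℤ)) 0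
      ≤ min ((Finset.univ.filter (fun i : Fin m => a i = α)).card : ℤ)
        ((∑ h ∈ Finset.Icc 1 (α - 1), ((zconj m a h : ℤ) - (bpad n b h : ℤ)))
          + ((zconj m a α : ℤ) - (bpad n b α : ℤ))
          + min (sInf {s : ℤ | ∃ r ∈ Finset.Icc (α + 1) (n + 1),
              s = ∑ h ∈ Finset.Icc (α + 1) r,
                    ((zconj m a h : ℤ) - (bpad n b h : ℤ))}) 0) :=
  stmt19_general m n a b ha hfeas α hα₁ hα₂
end
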